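/- arXiv:2411.17668 — 6 statements merged into one kernel-verified Lean document; each statement's English description precedes it below -/
import Mathlib

section
/- Fix c ≥ 1 and let ŝ be the infinite stepsize schedule obtained by recursively concatenating silver schedules with k_j = ⌊2·2^{cj}⌋ copies of the j-th silver schedule. Then for every integer t ≥ 1, the sum of the first t entries of ŝ satisfies A_{t+1}(ŝ) ≥ (1/36)·t^{(c + log₂ρ)/(c+1)}, where ρ = 1 + √2. -/
open Finset
open scoped RealInnerProductSpace

noncomputable section

/-- Gradient-descent trajectory along a finite list of stepsizes. -/
def gdIter {E : Type*} [AddCommGroup E] [SMul ℝ E] (g : E → E) : E → List ℝ → E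
  | x, [] => x
  | x, a :: L => gdIter g (x - a • g x) L

/-- A finite stepsize schedule (of positive reals) is primitive if the key
gradient-descent inequality holds for every smooth convex problem instance. -/
def IsPrimitive (L : List ℝ) : Prop :=
  (∀ a ∈ L, (0:ℝ) < a) ∧
  ∀ (d : ℕ) (f : EuclideanSpace ℝ (Fin d) → ℝ)
    (g : EuclideanSpace ℝ (Fin d) → EuclideanSpace ℝ (Fin d)),
    ConvexOn ℝ Set.univ f →
    (∀ y, HasGradientAt f (g y) y) →
    LipschitzWith 1 g →
    ∀ xstar : EuclideanSpace ℝ (Fin d), IsMinOn f Set.univ xstar →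
    ∀ x1 : EuclideanSpace ℝ (Fin d),
      L.sum * (f (gdIter g x1 L) - f xstar)
        + (L.sum * (L.sum + 1) / 2) * ‖g (gdIter g x1 L)‖ ^ 2
        + 2⁻¹ * ‖gdIter g x1 L - xstar‖ ^ 2
      ≤ 2⁻¹ * ‖x1 - xstar‖ ^ 2
        + ∑ i : Fin L.length,
            L.get i *
              (f (gdIter g x1 (L.take i.1)) - f xstar
                - ⟪g (gdIter g x1 (L.take i.1)), gdIter g x1 (L.take i.1) - xstar⟫
                + 2⁻¹ * ‖g (gdIter g x1 (L.take i.1))‖ ^ 2)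

/-- The join-stepsize function. -/
def phi (x y : ℝ) : ℝ :=
  (-(x + y) + Real.sqrt ((x + y + 2) ^ 2 + 4 * (x + 1) * (y + 1))) / 2

/-- Concatenation of two stepsize schedules with the join stepsize in between. -/
def concatSched (s r : List ℝ) : List ℝ := s ++ phi s.sum r.sum :: r

/-- The silver stepsize schedules. -/
def silver : ℕ → List ℝ
  | 0 => []
  | i + 1 => concatSched (silver i) (silver i)

/-- Recursive concatenation of a sequence of schedules. -/
def concatAll (s : ℕ → List ℝ) : ℕ → List ℝ
  | 0 => []
  | i + 1 => concatSched (concatAll s i) (s (i + 1))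

/-- The number of copies of the `j`-th silver schedule. -/
def kSeq (c : ℝ) (j : ℕ) : ℕ := ⌊2 * (2:ℝ) ^ (c * j)⌋₊

def MSeq (c : ℝ) (j : ℕ) : ℕ := ∑ j' ∈ Finset.Icc 1 j, kSeq c j'

/-- The block index `j` of `i`, i.e. the `j` with `M_{j-1} < i ≤ M_j`. -/
def blockIdx (c : ℝ) (i : ℕ) : ℕ := sInf {j | i ≤ MSeq c j}

/-- The partially concatenated schedules `ŝ_i`. -/
def shatSched (c : ℝ) : ℕ → List ℝ := concatAll fun i => silver (blockIdx c i)

/-- The `t`-th entry (1-indexed) of the infinite limiting schedule `ŝ`. -/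
def shatEntry (c : ℝ) (t : ℕ) : ℝ := (shatSched c t).getD (t - 1) 0
open Finset

lemma one_le_phi {x y : ℝ} (hx : 0 ≤ x) (hy : 0 ≤ y) : 1 ≤ phi x y := by
  have h1 : x + y + 2 = Real.sqrt ((x + y + 2) ^ 2) := (Real.sqrt_sq (by linarith)).symm
  have h2 : Real.sqrt ((x + y + 2) ^ 2) ≤
      Real.sqrt ((x + y + 2) ^ 2 + 4 * (x + 1) * (y + 1)) :=
    Real.sqrt_le_sqrt (by nlinarith)
  unfold phi
  linarith

lemma silver_sum (j : ℕ) : (silver j).sum = (1 + Real.sqrt 2) ^ j - 1 := by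
  induction j with
  | zero => simp [silver]
  | succ n ih =>
    have h2 : (0:ℝ) ≤ Real.sqrt 2 := Real.sqrt_nonneg 2
    have hs2 : Real.sqrt 2 ^ 2 = 2 := Real.sq_sqrt (by norm_num)
    have hρ : (1:ℝ) ≤ (1 + Real.sqrt 2) ^ n := one_le_pow₀ (by linarith)
    set x : ℝ := (1 + Real.sqrt 2) ^ n - 1 with hxdef
    have hx1 : (0:ℝ) ≤ x + 1 := by simp [hxdef]; linarith
    have key : Real.sqrt ((x + x + 2) ^ 2 + 4 * (x + 1) * (x + 1))
        = 2 * Real.sqrt 2 * (x + 1) := by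
      rw [show (x + x + 2) ^ 2 + 4 * (x + 1) * (x + 1) = (2 * Real.sqrt 2 * (x + 1)) ^ 2 by
        nlinarith [hs2]]
      exact Real.sqrt_sq (by positivity)
    show (concatSched (silver n) (silver n)).sum = _
    rw [concatSched, List.sum_append, List.sum_cons, ih, phi, key, pow_succ]
    linear_combination (1 + Real.sqrt 2) * hxdef

lemma silver_sum_nonneg (j : ℕ) : 0 ≤ (silver j).sum := by
  rw [silver_sum]
  have : (1:ℝ) ≤ (1 + Real.sqrt 2) ^ j := one_le_pow₀ (by have := Real.sqrt_nonneg 2; linarith)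
  linarith

lemma silver_len (j : ℕ) : (silver j).length + 1 = 2 ^ j := by
  induction j with
  | zero => simp [silver]
  | succ n ih =>
    show (concatSched (silver n) (silver n)).length + 1 = _
    rw [concatSched, List.length_append, List.length_cons, pow_succ]
    omega

lemma silver_one_le (j : ℕ) : ∀ a ∈ silver j, 1 ≤ a := by
  induction j with
  | zero => simp [silver]
  | succ n ih =>
    intro a ha
    show 1 ≤ a
    rw [show silver (n+1) = concatSched (silver n) (silver n) from rfl, concatSched] at ha
    rcases List.mem_append.mp ha with h | h
    · exact ih a h
    · rcases List.mem_cons.mp h with h | h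
      · subst h; exact one_le_phi (silver_sum_nonneg n) (silver_sum_nonneg n)
      · exact ih a h

lemma sum_nonneg_of_one_le {l : List ℝ} (h : ∀ a ∈ l, 1 ≤ a) : 0 ≤ l.sum :=
  List.sum_nonneg fun a ha => le_trans zero_le_one (h a ha)

lemma concatAll_one_le (s : ℕ → List ℝ) (hs : ∀ i, ∀ a ∈ s i, 1 ≤ a) (b : ℕ) :
    ∀ a ∈ concatAll s b, 1 ≤ a := by
  induction b with
  | zero => simp [concatAll]
  | succ n ih =>
    intro a ha
    rw [show concatAll s (n+1) = concatSched (concatAll s n) (s (n+1)) from rfl,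
      concatSched] at ha
    rcases List.mem_append.mp ha with h | h
    · exact ih a h
    · rcases List.mem_cons.mp h with h | h
      · subst h
        exact one_le_phi (sum_nonneg_of_one_le ih) (sum_nonneg_of_one_le (hs (n+1)))
      · exact hs _ a h

lemma concatAll_length (s : ℕ → List ℝ) (b : ℕ) :
    (concatAll s b).length = ∑ i ∈ Finset.range b, ((s (i+1)).length + 1) := by
  induction b with
  | zero => simp [concatAll]
  | succ n ih =>
    rw [show concatAll s (n+1) = concatSched (concatAll s n) (s (n+1)) from rfl,
      concatSched, List.length_append, List.length_cons, Finset.sum_range_succ, ih]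

lemma concatAll_sum_ge (s : ℕ → List ℝ) (hs : ∀ i, ∀ a ∈ s i, 1 ≤ a) (b : ℕ) :
    ∑ i ∈ Finset.range b, (1 + (s (i+1)).sum) ≤ (concatAll s b).sum := by
  induction b with
  | zero => simp [concatAll]
  | succ n ih =>
    rw [show concatAll s (n+1) = concatSched (concatAll s n) (s (n+1)) from rfl,
      concatSched, List.sum_append, List.sum_cons, Finset.sum_range_succ]
    have h1 : 1 ≤ phi (concatAll s n).sum (s (n+1)).sum :=
      one_le_phi (sum_nonneg_of_one_le (concatAll_one_le s hs n))
        (sum_nonneg_of_one_le (hs (n+1)))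
    linarith

lemma concatAll_prefix (s : ℕ → List ℝ) {m n : ℕ} (h : m ≤ n) :
    concatAll s m <+: concatAll s n := by
  induction n with
  | zero => rw [Nat.le_zero.mp h]
  | succ k ih =>
    rcases Nat.lt_or_ge m (k+1) with h' | h'
    · exact (ih (by omega)).trans ⟨_, rfl⟩
    · rw [Nat.le_antisymm h h']

lemma shat_one_le (c : ℝ) (b : ℕ) : ∀ a ∈ shatSched c b, 1 ≤ a :=
  concatAll_one_le _ (fun i => silver_one_le (blockIdx c i)) b

lemma shat_length (c : ℝ) (b : ℕ) :
    (shatSched c b).length = ∑ i ∈ Finset.range b, 2 ^ (blockIdx c (i+1)) := by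
  rw [shatSched, concatAll_length]
  exact Finset.sum_congr rfl fun i _ => silver_len (blockIdx c (i+1))

lemma shat_length_ge (c : ℝ) (b : ℕ) : b ≤ (shatSched c b).length := by
  rw [shat_length]
  calc b = ∑ i ∈ Finset.range b, 1 := by simp
  _ ≤ _ := Finset.sum_le_sum fun i _ => Nat.one_le_two_pow

lemma shat_sum_ge (c : ℝ) (b : ℕ) :
    ∑ i ∈ Finset.range b, (1 + Real.sqrt 2) ^ (blockIdx c (i+1)) ≤ (shatSched c b).sum := by
  refine le_trans (le_of_eq ?_) (concatAll_sum_ge _ (fun i => silver_one_le (blockIdx c i)) b)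
  refine Finset.sum_congr rfl fun i _ => ?_
  rw [silver_sum]
  ring

lemma sum_getD (l : List ℝ) (n : ℕ) (hn : n ≤ l.length) :
    ∑ i ∈ Finset.range n, l.getD i 0 = (l.take n).sum := by
  induction n with
  | zero => simp
  | succ m ih =>
    rw [Finset.sum_range_succ, ih (by omega), List.sum_take_succ l m (by omega),
      List.getD_eq_getElem l 0 (by omega)]

lemma shat_entry_eq (c : ℝ) {i t : ℕ} (hit : i < t) :
    shatEntry c (i+1) = (shatSched c t).getD i 0 := by
  have hlen : i < (shatSched c (i+1)).length := lt_of_lt_of_le (Nat.lt_succ_self i)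
    (shat_length_ge c (i+1))
  have hpre : shatSched c (i+1) <+: shatSched c t := concatAll_prefix _ hit
  have hlen2 : i < (shatSched c t).length := lt_of_lt_of_le hlen hpre.length_le
  rw [shatEntry, Nat.add_sub_cancel, List.getD_eq_getElem _ 0 hlen,
    List.getD_eq_getElem _ 0 hlen2, hpre.getElem hlen]

lemma shat_A_ge_sum (c : ℝ) {b t : ℕ} (hbt : (shatSched c b).length ≤ t) :
    (shatSched c b).sum ≤ ∑ i ∈ Finset.range t, shatEntry c (i+1) := by
  have hb : b ≤ t := le_trans (shat_length_ge c b) hbt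
  have hlen : t ≤ (shatSched c t).length := by
    calc t = ∑ i ∈ Finset.range t, 1 := by simp
    _ ≤ _ := by rw [shat_length]; exact Finset.sum_le_sum fun i _ => Nat.one_le_two_pow
  have hrw : ∑ i ∈ Finset.range t, shatEntry c (i+1)
      = ∑ i ∈ Finset.range t, (shatSched c t).getD i 0 :=
    Finset.sum_congr rfl fun i hi => shat_entry_eq c (Finset.mem_range.mp hi)
  have hpre : shatSched c b <+: shatSched c t := concatAll_prefix _ hb
  have h1 : ∑ i ∈ Finset.range ((shatSched c b).length), (shatSched c t).getD i 0
      = (shatSched c b).sum := by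
    rw [show ∑ i ∈ Finset.range ((shatSched c b).length), (shatSched c t).getD i 0
        = ∑ i ∈ Finset.range ((shatSched c b).length), (shatSched c b).getD i 0 from
      Finset.sum_congr rfl fun i hi => by
        rw [List.getD_eq_getElem _ 0 (Finset.mem_range.mp hi),
          List.getD_eq_getElem _ 0 (lt_of_lt_of_le (Finset.mem_range.mp hi) hpre.length_le),
          hpre.getElem (Finset.mem_range.mp hi)]]
    rw [sum_getD _ _ le_rfl, List.take_length]
  rw [hrw, ← h1]
  refine Finset.sum_le_sum_of_subset_of_nonneg ?_ fun i hi _ => ?_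
  · exact Finset.range_subset_range.mpr hbt
  · have hi' : i < (shatSched c t).length := lt_of_lt_of_le (Finset.mem_range.mp hi) hlen
    rw [List.getD_eq_getElem _ 0 hi']
    exact le_trans zero_le_one (shat_one_le c t _ (List.getElem_mem hi'))

lemma shat_A_ge_t (c : ℝ) (t : ℕ) :
    (t : ℝ) ≤ ∑ i ∈ Finset.range t, shatEntry c (i+1) := by
  have hlen : t ≤ (shatSched c t).length := by
    calc t = ∑ i ∈ Finset.range t, 1 := by simp
    _ ≤ _ := by rw [shat_length]; exact Finset.sum_le_sum fun i _ => Nat.one_le_two_pow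
  have hrw : ∑ i ∈ Finset.range t, shatEntry c (i+1)
      = ∑ i ∈ Finset.range t, (shatSched c t).getD i 0 :=
    Finset.sum_congr rfl fun i hi => shat_entry_eq c (Finset.mem_range.mp hi)
  rw [hrw]
  calc (t:ℝ) = ∑ i ∈ Finset.range t, (1:ℝ) := by simp
  _ ≤ _ := Finset.sum_le_sum fun i hi => by
      have hi' : i < (shatSched c t).length := lt_of_lt_of_le (Finset.mem_range.mp hi) hlen
      rw [List.getD_eq_getElem _ 0 hi']
      exact shat_one_le c t _ (List.getElem_mem hi')

lemma MSeq_zero (c : ℝ) : MSeq c 0 = 0 := by simp [MSeq]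

lemma MSeq_succ (c : ℝ) (j : ℕ) : MSeq c (j+1) = MSeq c j + kSeq c (j+1) := by
  rw [MSeq, MSeq, Finset.sum_Icc_succ_top (by omega)]

lemma kSeq_one_le {c : ℝ} (hc : 0 ≤ c) (j : ℕ) : 1 ≤ kSeq c j := by
  have h1 : (1:ℝ) ≤ (2:ℝ) ^ (c * j) := Real.one_le_rpow (by norm_num) (by positivity)
  have : (1:ℕ) ≤ ⌊(2 * (2:ℝ) ^ (c * j))⌋₊ := Nat.le_floor (by push_cast; linarith)
  exact this

lemma MSeq_mono (c : ℝ) {j j' : ℕ} (h : j ≤ j') : MSeq c j ≤ MSeq c j' :=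
  Finset.sum_le_sum_of_subset (Finset.Icc_subset_Icc_right h)

lemma MSeq_ge {c : ℝ} (hc : 0 ≤ c) (j : ℕ) : j ≤ MSeq c j := by
  calc j = ∑ j' ∈ Finset.Icc 1 j, 1 := by simp
  _ ≤ _ := Finset.sum_le_sum fun i _ => kSeq_one_le hc i

lemma blockIdx_spec {c : ℝ} (hc : 0 ≤ c) {i : ℕ} (hi : 1 ≤ i) :
    ∃ J', blockIdx c i = J' + 1 ∧ MSeq c J' < i ∧ i ≤ MSeq c (J'+1) := by
  have hne : {j | i ≤ MSeq c j}.Nonempty := ⟨i, MSeq_ge hc i⟩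
  have hmem : i ≤ MSeq c (sInf {j | i ≤ MSeq c j}) := Nat.sInf_mem hne
  have hzero : blockIdx c i ≠ 0 := by
    intro h
    rw [blockIdx] at h
    rw [h, MSeq_zero] at hmem
    omega
  obtain ⟨J', hJ'⟩ : ∃ J', blockIdx c i = J' + 1 := ⟨blockIdx c i - 1, by omega⟩
  refine ⟨J', hJ', ?_, by rw [← hJ']; exact hmem⟩
  have : J' ∉ {j | i ≤ MSeq c j} := Nat.notMem_of_lt_sInf (by rw [← blockIdx]; omega)
  simpa using Nat.lt_of_not_le this

lemma blockIdx_eq {c : ℝ} (hc : 0 ≤ c) {i J' : ℕ} (h1 : MSeq c J' < i)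
    (h2 : i ≤ MSeq c (J'+1)) : blockIdx c i = J' + 1 := by
  obtain ⟨K', hK, hK1, hK2⟩ := blockIdx_spec hc (by omega : 1 ≤ i)
  rw [hK]
  by_contra h
  rcases Nat.lt_or_ge (K'+1) (J'+1) with h' | h'
  · have : MSeq c (K'+1) ≤ MSeq c J' := MSeq_mono c (by omega)
    omega
  · have : MSeq c (J'+1) ≤ MSeq c K' := MSeq_mono c (by omega)
    omega

lemma sum_const_Ioc {M : Type*} [AddCommMonoid M] {c : ℝ} (hc : 0 ≤ c) (f : ℕ → M)
    {J' a b : ℕ} (h1 : MSeq c J' ≤ a) (h2 : a ≤ b) (h3 : b ≤ MSeq c (J'+1)) :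
    ∑ i ∈ Finset.Ioc a b, f (blockIdx c i) = (b - a) • f (J'+1) := by
  rw [Finset.sum_congr rfl (fun i hi => by
    rw [blockIdx_eq hc (lt_of_le_of_lt h1 (Finset.mem_Ioc.mp hi).1)
      (le_trans (Finset.mem_Ioc.mp hi).2 h3)]), Finset.sum_const, Nat.card_Ioc]

lemma sum_blocks {M : Type*} [AddCommMonoid M] {c : ℝ} (hc : 0 ≤ c) (f : ℕ → M) (n : ℕ) :
    ∑ i ∈ Finset.Icc 1 (MSeq c n), f (blockIdx c i)
      = ∑ j' ∈ Finset.Icc 1 n, (kSeq c j') • f j' := by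
  induction n with
  | zero => simp [MSeq_zero]
  | succ n ih =>
    have h1 : MSeq c n ≤ MSeq c (n+1) := MSeq_mono c (by omega)
    have key : ∑ i ∈ Finset.Ioc (MSeq c n) (MSeq c (n+1)), f (blockIdx c i)
        = kSeq c (n+1) • f (n+1) := by
      rw [sum_const_Ioc hc f le_rfl h1 le_rfl, MSeq_succ]
      congr 1
      omega
    have hsplit := sum_Ioc_consecutive (fun i => f (blockIdx c i)) (Nat.zero_le (MSeq c n)) h1
    rw [show Finset.Icc 1 (MSeq c (n+1)) = Finset.Ioc 0 (MSeq c (n+1)) by rfl, ← hsplit]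
    rw [show Finset.Ioc 0 (MSeq c n) = Finset.Icc 1 (MSeq c n) by rfl, ih, key,
      Finset.sum_Icc_succ_top (by omega : 1 ≤ n+1)]

lemma sum_blocks_partial {M : Type*} [AddCommMonoid M] {c : ℝ} (hc : 0 ≤ c) (f : ℕ → M)
    {J' b : ℕ} (h1 : MSeq c J' ≤ b) (h2 : b ≤ MSeq c (J'+1)) :
    ∑ i ∈ Finset.Icc 1 b, f (blockIdx c i)
      = (∑ j' ∈ Finset.Icc 1 J', (kSeq c j') • f j') + (b - MSeq c J') • f (J'+1) := by
  have hsplit := sum_Ioc_consecutive (fun i => f (blockIdx c i)) (Nat.zero_le (MSeq c J')) h1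
  rw [show Finset.Icc 1 b = Finset.Ioc 0 b by rfl, ← hsplit,
    show Finset.Ioc 0 (MSeq c J') = Finset.Icc 1 (MSeq c J') by rfl, sum_blocks hc,
    sum_const_Ioc hc f le_rfl h1 h2]

lemma range_shift {M : Type*} [AddCommMonoid M] (g : ℕ → M) (b : ℕ) :
    ∑ i ∈ Finset.range b, g (i+1) = ∑ i ∈ Finset.Icc 1 b, g i := by
  induction b with
  | zero => simp
  | succ n ih => rw [Finset.sum_range_succ, ih, Finset.sum_Icc_succ_top (by omega : 1 ≤ n+1)]

lemma kSeq_le_real {c : ℝ} (hc : 0 ≤ c) (j : ℕ) :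
    (kSeq c j : ℝ) ≤ 2 * (2:ℝ) ^ (c * j) :=
  Nat.floor_le (by positivity)

lemma kSeq_ge_real {c : ℝ} (hc : 0 ≤ c) (j : ℕ) :
    (2:ℝ) ^ (c * j) ≤ (kSeq c j : ℝ) := by
  have h1 : (1:ℝ) ≤ (2:ℝ) ^ (c * (j:ℝ)) := Real.one_le_rpow one_le_two (by positivity)
  have h2 := Nat.lt_floor_add_one (2 * (2:ℝ) ^ (c * (j:ℝ)))
  have h3 : kSeq c j = ⌊2 * (2:ℝ) ^ (c * (j:ℝ))⌋₊ := rfl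
  rw [h3]
  linarith only [h1, h2]

lemma two_rpow_two : ((2:ℝ):ℝ) ^ (2:ℝ) = 4 := by
  rw [show (2:ℝ) = ((2:ℕ):ℝ) by norm_num, Real.rpow_natCast]; norm_num

set_option maxHeartbeats 1600000 in
theorem main_bound (c : ℝ) (hc : 1 ≤ c) (t : ℕ) (ht : 1 ≤ t) :
    (1 / 36 : ℝ) * (t : ℝ) ^ ((c + Real.logb 2 (1 + Real.sqrt 2)) / (c + 1)) ≤
      ∑ i ∈ Finset.range t, shatEntry c (i + 1) := by
  classical
  have hc0 : (0:ℝ) ≤ c := by linarith only [hc]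
  have hs2 : Real.sqrt 2 ^ 2 = 2 := Real.sq_sqrt (by norm_num)
  have hs2n : (0:ℝ) ≤ Real.sqrt 2 := Real.sqrt_nonneg 2
  have hs2ge1 : (1:ℝ) ≤ Real.sqrt 2 := by nlinarith only [hs2, hs2n]
  set ρ : ℝ := 1 + Real.sqrt 2 with hρdef
  have hρ2 : (2:ℝ) ≤ ρ := by rw [hρdef]; linarith only [hs2ge1]
  have hρ4 : ρ ≤ 4 := by rw [hρdef]; nlinarith only [hs2, hs2n]
  have hρpos : (0:ℝ) < ρ := by linarith only [hρ2]
  set lg : ℝ := Real.logb 2 ρ with hlgdef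
  have hlg1 : 1 ≤ lg := by
    rw [hlgdef, Real.le_logb_iff_rpow_le (by norm_num) hρpos, Real.rpow_one]
    exact hρ2
  have hlg2 : lg ≤ 2 := by
    rw [hlgdef, Real.logb_le_iff_le_rpow (by norm_num) hρpos, two_rpow_two]
    exact hρ4
  set α : ℝ := (c + lg) / (c + 1) with hαdef
  have hc1 : (0:ℝ) < c + 1 := by linarith only [hc]
  have hca : (c + 1) * α = c + lg := by rw [hαdef]; field_simp
  have hα1 : 1 ≤ α := by rw [hαdef, le_div_iff₀ hc1]; linarith only [hlg1]
  have hα2 : α ≤ 2 := by rw [hαdef, div_le_iff₀ hc1]; linarith only [hlg2, hc]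
  have hα0 : (0:ℝ) ≤ α := by linarith only [hα1]
  have h2lg : (2:ℝ) ^ lg = ρ := Real.rpow_logb (by norm_num) (by norm_num) hρpos
  have hρpow : ∀ n : ℕ, (2:ℝ) ^ ((n:ℝ) * lg) = ρ ^ n := fun n => by
    rw [mul_comm, Real.rpow_mul (by norm_num : (0:ℝ) ≤ 2), h2lg, Real.rpow_natCast]
  have htpos : (0:ℝ) ≤ (t:ℝ) := by positivity
  -- combinatorial setup
  have hL0 : (shatSched c 0).length ≤ t := by simp [shatSched, concatAll]
  obtain ⟨b0, hbs, hbs1⟩ : ∃ b0, (shatSched c b0).length ≤ t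
      ∧ t < (shatSched c (b0+1)).length := by
    refine ⟨Nat.findGreatest (fun b => (shatSched c b).length ≤ t) t,
      Nat.findGreatest_spec (P := fun b => (shatSched c b).length ≤ t) (Nat.zero_le t) hL0, ?_⟩
    rcases le_or_gt (Nat.findGreatest (fun b => (shatSched c b).length ≤ t) t + 1) t with h | h
    · exact lt_of_not_ge (Nat.findGreatest_is_greatest
        (P := fun b => (shatSched c b).length ≤ t) (n := t) (Nat.lt_succ_self _) h)
    · exact lt_of_lt_of_le h (shat_length_ge c _)
  obtain ⟨J', hJeq, hJl, hJu⟩ := blockIdx_spec hc0 (show 1 ≤ b0+1 by omega)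
  have hMb : MSeq c J' ≤ b0 := by omega
  have hbM : b0 ≤ MSeq c (J'+1) := by omega
  set m : ℕ := b0 - MSeq c J' with hmdef
  have hmk : m + 1 ≤ kSeq c (J'+1) := by
    have := MSeq_succ c J'
    omega
  -- length computations
  have hLb : (shatSched c b0).length
      = (∑ j' ∈ Finset.Icc 1 J', kSeq c j' * 2 ^ j') + m * 2 ^ (J'+1) := by
    rw [shat_length, range_shift (fun i => 2 ^ (blockIdx c i)) b0,
      sum_blocks_partial hc0 _ hMb hbM]
    simp [smul_eq_mul, hmdef]
  have hLb1 : (shatSched c (b0+1)).length = (shatSched c b0).length + 2 ^ (J'+1) := by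
    rw [shat_length, shat_length, Finset.sum_range_succ, hJeq]
  -- A lower bounds
  set A : ℝ := ∑ i ∈ Finset.range t, shatEntry c (i+1) with hAdef
  have hAt : (t:ℝ) ≤ A := shat_A_ge_t c t
  have hAP : (∑ j' ∈ Finset.Icc 1 J', (kSeq c j' : ℝ) * ρ ^ j') + (m:ℝ) * ρ ^ (J'+1) ≤ A := by
    have h1 := shat_A_ge_sum c hbs
    have h2 := shat_sum_ge c b0
    have h3 : ∑ i ∈ Finset.range b0, ρ ^ (blockIdx c (i+1))
        = (∑ j' ∈ Finset.Icc 1 J', (kSeq c j' : ℝ) * ρ ^ j') + (m:ℝ) * ρ ^ (J'+1) := by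
      rw [range_shift (fun i => ρ ^ (blockIdx c i)) b0, sum_blocks_partial hc0 _ hMb hbM]
      simp [nsmul_eq_mul, hmdef]
    rw [← h3]
    exact le_trans h2 h1
  have hsum0 : (0:ℝ) ≤ ∑ j' ∈ Finset.Icc 1 J', (kSeq c j' : ℝ) * ρ ^ j' :=
    Finset.sum_nonneg fun j' _ => by positivity
  have hmρ0 : (0:ℝ) ≤ (m:ℝ) * ρ ^ (J'+1) := by positivity
  -- real quantities
  set q : ℝ := (2:ℝ) ^ (c+1) with hqdef
  have hq4 : (4:ℝ) ≤ q := by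
    rw [hqdef, ← two_rpow_two]
    exact Real.rpow_le_rpow_of_exponent_le one_le_two (by linarith only [hc])
  have hqpos : (0:ℝ) < q := by linarith only [hq4]
  set Xv : ℝ := q ^ J' with hXdef
  have hX1 : (1:ℝ) ≤ Xv := one_le_pow₀ (by linarith only [hq4])
  have hXpos : (0:ℝ) < Xv := by linarith only [hX1]
  have hqj : ∀ j : ℕ, q ^ j = (2:ℝ) ^ (c * (j:ℝ)) * 2 ^ j := fun j => by
    rw [hqdef, ← Real.rpow_natCast ((2:ℝ)^(c+1)) j, ← Real.rpow_mul (by norm_num : (0:ℝ) ≤ 2),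
      show (c+1) * (j:ℝ) = c * j + j by ring, Real.rpow_add (by norm_num : (0:ℝ) < 2),
      Real.rpow_natCast]
  -- geometric bound
  have hgeom : ∑ j' ∈ Finset.Icc 1 J', q ^ j' ≤ (4/3) * Xv := by
    have hsub : ∑ j' ∈ Finset.Icc 1 J', q ^ j' ≤ ∑ j' ∈ Finset.range (J'+1), q ^ j' := by
      refine Finset.sum_le_sum_of_subset_of_nonneg ?_ fun i _ _ => by positivity
      intro i hi
      simp only [Finset.mem_Icc] at hi
      simp only [Finset.mem_range]
      omega
    have hg : ∑ j' ∈ Finset.range (J'+1), q ^ j' = (q ^ (J'+1) - 1)/(q - 1) :=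
      geom_sum_eq (by linarith only [hq4]) (J'+1)
    have hq1 : (0:ℝ) < q - 1 := by linarith only [hq4]
    have hP1 : (1:ℝ) ≤ q ^ J' := by rw [← hXdef]; exact hX1
    have hkey : q ^ J' * 4 ≤ q ^ J' * q :=
      mul_le_mul_of_nonneg_left hq4 (pow_nonneg (le_of_lt hqpos) J')
    have hgle : (q ^ (J'+1) - 1)/(q - 1) ≤ (4/3) * Xv := by
      rw [div_le_iff₀ hq1, hXdef, pow_succ]
      linarith only [hP1, hkey]
    rw [hg] at hsub
    linarith only [hsub, hgle]
  have hSle : (∑ j' ∈ Finset.Icc 1 J', (kSeq c j' : ℝ) * (2:ℝ) ^ j') ≤ (8/3) * Xv := by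
    have h1 : ∀ j' ∈ Finset.Icc 1 J', (kSeq c j' : ℝ) * (2:ℝ) ^ j' ≤ 2 * q ^ j' := by
      intro j' _
      rw [hqj j']
      have hk := kSeq_le_real hc0 j'
      have h2 : (0:ℝ) ≤ (2:ℝ) ^ j' := by positivity
      exact le_trans (mul_le_mul_of_nonneg_right hk h2) (le_of_eq (by ring))
    calc (∑ j' ∈ Finset.Icc 1 J', (kSeq c j' : ℝ) * (2:ℝ) ^ j')
        ≤ ∑ j' ∈ Finset.Icc 1 J', 2 * q ^ j' := Finset.sum_le_sum h1
      _ = 2 * ∑ j' ∈ Finset.Icc 1 J', q ^ j' := by rw [Finset.mul_sum]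
      _ ≤ 2 * ((4/3) * Xv) := by linarith only [hgeom]
      _ = (8/3) * Xv := by ring
  -- Xv^α = 2^(c J') ρ^(J')
  have hXα : Xv ^ α = (2:ℝ) ^ (c * (J':ℝ)) * ρ ^ J' := by
    rw [hXdef, hqdef, ← Real.rpow_natCast ((2:ℝ)^(c+1)) J',
      ← Real.rpow_mul (by norm_num : (0:ℝ) ≤ 2),
      ← Real.rpow_mul (by norm_num : (0:ℝ) ≤ 2),
      show (c+1) * (J':ℝ) * α = c * J' + (J':ℝ) * lg by linear_combination (J':ℝ) * hca,
      Real.rpow_add (by norm_num : (0:ℝ) < 2), hρpow J']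
  -- real upper bound on t
  have htR : (t:ℝ) ≤ (8/3) * Xv + ((m:ℝ)+1) * 2 ^ (J'+1) := by
    have h0 := hbs1
    rw [hLb1, hLb] at h0
    have h1 := (Nat.cast_lt (α := ℝ)).mpr h0
    push_cast at h1
    linarith only [h1, hSle]
  -- main dichotomy
  have hmain : (t:ℝ) ≤ (16/3) * Xv ∨ (1 ≤ m ∧ (t:ℝ) ≤ 4 * (m:ℝ) * 2 ^ (J'+1)) := by
    rcases le_or_gt (((m:ℝ)+1) * 2 ^ (J'+1)) ((8/3) * Xv) with hcase | hcase
    · left; linarith only [htR, hcase]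
    · rcases Nat.eq_zero_or_pos m with hm0 | hm1
      · left
        have h2J : ((2:ℝ)) ^ (J'+1) ≤ 2 * Xv := by
          have h3 : (2:ℝ) ^ J' ≤ q ^ J' := pow_le_pow_left₀ (by norm_num) (by linarith only [hq4]) J'
          rw [hXdef, pow_succ]
          linarith only [h3]
        rw [hm0] at htR
        push_cast at htR
        linarith only [htR, h2J]
      · right
        have hm1R : (1:ℝ) ≤ (m:ℝ) := by exact_mod_cast hm1
        refine ⟨hm1, ?_⟩
        have h2J0 : (0:ℝ) ≤ (2:ℝ) ^ (J'+1) := by positivity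
        have hprod : (0:ℝ) ≤ ((m:ℝ) - 1) * 2 ^ (J'+1) :=
          mul_nonneg (by linarith only [hm1R]) h2J0
        linarith only [htR, hcase, hprod]
  -- conclude
  rcases hmain with hcase | ⟨hm1, hcase⟩
  · rcases Nat.eq_zero_or_pos J' with hJ0 | hJ1
    · -- J' = 0 : Xv = 1, t ≤ 16/3
      have hXv1 : Xv = 1 := by rw [hXdef, hJ0, pow_zero]
      rw [hXv1, mul_one] at hcase
      have ht1 : (1:ℝ) ≤ (t:ℝ) := by exact_mod_cast ht
      have h1 : (t:ℝ) ^ α ≤ (t:ℝ) ^ (2:ℝ) :=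
        Real.rpow_le_rpow_of_exponent_le ht1 hα2
      have h2 : (t:ℝ) ^ (2:ℝ) = (t:ℝ) * (t:ℝ) := by
        rw [show (2:ℝ) = ((2:ℕ):ℝ) by norm_num, Real.rpow_natCast]; ring
      have h3 : (t:ℝ) * (t:ℝ) ≤ (16/3) * (t:ℝ) :=
        mul_le_mul_of_nonneg_right hcase htpos
      rw [h2] at h1
      have h4 : (t:ℝ) ^ α ≤ (16/3) * (t:ℝ) := le_trans h1 h3
      calc (1/36 : ℝ) * (t:ℝ) ^ α ≤ (1/36) * ((16/3) * (t:ℝ)) := by linarith only [h4]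
        _ ≤ (t:ℝ) := by linarith only [htpos]
        _ ≤ A := hAt
    · -- J' ≥ 1
      have hYA : Xv ^ α ≤ A := by
        rw [hXα]
        have hterm : (2:ℝ) ^ (c * (J':ℝ)) * ρ ^ J' ≤ (kSeq c J' : ℝ) * ρ ^ J' :=
          mul_le_mul_of_nonneg_right (kSeq_ge_real hc0 J') (by positivity)
        have hpick : (kSeq c J' : ℝ) * ρ ^ J'
            ≤ ∑ j' ∈ Finset.Icc 1 J', (kSeq c j' : ℝ) * ρ ^ j' :=
          Finset.single_le_sum (f := fun j' => (kSeq c j' : ℝ) * ρ ^ j')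
            (fun i _ => by positivity) (Finset.mem_Icc.mpr ⟨hJ1, le_refl J'⟩)
        linarith only [hterm, hpick, hAP, hmρ0]
      have h1 : (t:ℝ) ^ α ≤ ((16/3) * Xv) ^ α :=
        Real.rpow_le_rpow htpos hcase hα0
      have h2 : ((16/3) * Xv) ^ α = (16/3 : ℝ) ^ α * Xv ^ α :=
        Real.mul_rpow (by norm_num) (le_of_lt hXpos)
      have h3 : (16/3 : ℝ) ^ α ≤ (16/3 : ℝ) ^ (2:ℝ) :=
        Real.rpow_le_rpow_of_exponent_le (by norm_num) hα2
      have h4 : (16/3 : ℝ) ^ (2:ℝ) = 256/9 := by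
        rw [show (2:ℝ) = ((2:ℕ):ℝ) by norm_num, Real.rpow_natCast]; norm_num
      have hXαpos : (0:ℝ) ≤ Xv ^ α := Real.rpow_nonneg (le_of_lt hXpos) α
      have h5 : (16/3 : ℝ) ^ α * Xv ^ α ≤ (256/9) * Xv ^ α :=
        mul_le_mul_of_nonneg_right (by rw [← h4]; exact h3) hXαpos
      rw [h2] at h1
      calc (1/36 : ℝ) * (t:ℝ) ^ α ≤ (1/36) * ((256/9) * Xv ^ α) := by linarith only [h1, h5]
        _ ≤ Xv ^ α := by linarith only [hXαpos]
        _ ≤ A := hYA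
  · -- m ≥ 1, t ≤ 4 m 2^(J'+1)
    have hm1R : (1:ℝ) ≤ (m:ℝ) := by exact_mod_cast hm1
    have hmpos : (0:ℝ) < (m:ℝ) := by linarith only [hm1R]
    set N : ℕ := J' + 1 with hNdef
    have hmle : (m:ℝ) ≤ (2:ℝ) ^ (c * (N:ℝ) + 1) := by
      have h1 : (m:ℝ) + 1 ≤ (kSeq c N : ℝ) := by exact_mod_cast hmk
      have h2 := kSeq_le_real hc0 N
      have h3 : (2:ℝ) ^ (c * (N:ℝ) + 1) = 2 * (2:ℝ) ^ (c * (N:ℝ)) := by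
        rw [Real.rpow_add (by norm_num : (0:ℝ) < 2), Real.rpow_one]; ring
      rw [h3]
      linarith only [h1, h2]
    have hmα : (m:ℝ) ^ α ≤ (m:ℝ) * (2:ℝ) ^ ((c * (N:ℝ) + 1) * (α - 1)) := by
      have h1 : (m:ℝ) ^ α = (m:ℝ) * (m:ℝ) ^ (α - 1) := by
        nth_rewrite 2 [← Real.rpow_one (m:ℝ)]
        rw [← Real.rpow_add hmpos]
        norm_num
      have h2 : (m:ℝ) ^ (α - 1) ≤ ((2:ℝ) ^ (c * (N:ℝ) + 1)) ^ (α - 1) :=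
        Real.rpow_le_rpow (le_of_lt hmpos) hmle (by linarith only [hα1])
      have h3 : ((2:ℝ) ^ (c * (N:ℝ) + 1)) ^ (α - 1)
          = (2:ℝ) ^ ((c * (N:ℝ) + 1) * (α - 1)) :=
        (Real.rpow_mul (by norm_num : (0:ℝ) ≤ 2) _ _).symm
      rw [h1, ← h3]
      exact mul_le_mul_of_nonneg_left h2 (le_of_lt hmpos)
    have h4α : (4:ℝ) ^ α ≤ 16 := by
      have h1 : (4:ℝ) ^ α ≤ (4:ℝ) ^ (2:ℝ) :=
        Real.rpow_le_rpow_of_exponent_le (by norm_num) hα2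
      have h2 : (4:ℝ) ^ (2:ℝ) = 16 := by
        rw [show (2:ℝ) = ((2:ℕ):ℝ) by norm_num, Real.rpow_natCast]; norm_num
      rw [h2] at h1
      exact h1
    have hcomb : (2:ℝ) ^ ((c * (N:ℝ) + 1) * (α - 1)) * (2:ℝ) ^ ((N:ℝ) * α)
        = ρ ^ N * (2:ℝ) ^ (α - 1) := by
      rw [← Real.rpow_add (by norm_num : (0:ℝ) < 2), ← hρpow N,
        ← Real.rpow_add (by norm_num : (0:ℝ) < 2)]
      congr 1
      push_cast
      linear_combination (N:ℝ) * hca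
    have h2α : (2:ℝ) ^ (α - 1) ≤ 2 := by
      have h1 : (2:ℝ) ^ (α - 1) ≤ (2:ℝ) ^ (1:ℝ) :=
        Real.rpow_le_rpow_of_exponent_le one_le_two (by linarith only [hα2])
      rwa [Real.rpow_one] at h1
    have hρN0 : (0:ℝ) ≤ ρ ^ N := by positivity
    have h2v : (0:ℝ) ≤ (2:ℝ) ^ ((N:ℝ) * α) := Real.rpow_nonneg (by norm_num) _
    have hchain : (t:ℝ) ^ α ≤ 32 * (m:ℝ) * ρ ^ N := by
      have hprod : (0:ℝ) ≤ (2 - (2:ℝ) ^ (α - 1)) * ((m:ℝ) * ρ ^ N) :=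
        mul_nonneg (by linarith only [h2α]) (mul_nonneg (le_of_lt hmpos) hρN0)
      calc (t:ℝ) ^ α ≤ (4 * (m:ℝ) * 2 ^ N) ^ α :=
            Real.rpow_le_rpow htpos hcase hα0
        _ = (4:ℝ) ^ α * (m:ℝ) ^ α * ((2:ℝ) ^ N) ^ α := by
            rw [Real.mul_rpow (by positivity) (by positivity),
              Real.mul_rpow (by norm_num) (by positivity)]
        _ = (4:ℝ) ^ α * (m:ℝ) ^ α * (2:ℝ) ^ ((N:ℝ) * α) := by
            rw [← Real.rpow_natCast (2:ℝ) N, ← Real.rpow_mul (by norm_num : (0:ℝ) ≤ 2)]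
        _ ≤ 16 * ((m:ℝ) * (2:ℝ) ^ ((c * (N:ℝ) + 1) * (α - 1))) * (2:ℝ) ^ ((N:ℝ) * α) := by
            have hm0' : (0:ℝ) ≤ (m:ℝ) ^ α := Real.rpow_nonneg (le_of_lt hmpos) α
            exact mul_le_mul_of_nonneg_right
              (mul_le_mul h4α hmα hm0' (by norm_num : (0:ℝ) ≤ 16)) h2v
        _ = 16 * (m:ℝ) * ((2:ℝ) ^ ((c * (N:ℝ) + 1) * (α - 1)) * (2:ℝ) ^ ((N:ℝ) * α)) := by
            ring
        _ = 16 * (m:ℝ) * (ρ ^ N * (2:ℝ) ^ (α - 1)) := by rw [hcomb]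
        _ ≤ 32 * (m:ℝ) * ρ ^ N := by linarith only [hprod]
    have hAbound : (m:ℝ) * ρ ^ N ≤ A := by
      linarith only [hAP, hsum0]
    have hmρN : (0:ℝ) ≤ (m:ℝ) * ρ ^ N := mul_nonneg (le_of_lt hmpos) hρN0
    calc (1/36 : ℝ) * (t:ℝ) ^ α ≤ (1/36) * (32 * (m:ℝ) * ρ ^ N) := by linarith only [hchain]
      _ ≤ (m:ℝ) * ρ ^ N := by linarith only [hmρN]
      _ ≤ A := hAbound

/-- lower bound on the aggregate stepsize of the first `t` entries
of the infinite schedule `ŝ`: `A_{t+1}(ŝ) ≥ (1/36)·t^{(c+log₂ρ)/(c+1)}`. -/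
theorem shat_aggregate_stepsize_lower_bound (c : ℝ) (hc : 1 ≤ c) (t : ℕ) (ht : 1 ≤ t) :
    (1 / 36 : ℝ) * (t : ℝ) ^ ((c + Real.logb 2 (1 + Real.sqrt 2)) / (c + 1)) ≤
      ∑ i ∈ Finset.range t, shatEntry c (i + 1) := by
  exact main_bound c hc t ht
end
end

section
/- Fix c ≥ 1 and set k_j = ⌊2·2^{cj}⌋ for j ≥ 1. For an integer t ≥ 1, let o_t be the unique integer satisfying Σ_{j=1}^{o_t−1} k_j·2^j < t ≤ Σ_{j=1}^{o_t} k_j·2^j. Then 2^{o_t} ≤ 2·t^{1/(c+1)}. -/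
open Finset
open scoped RealInnerProductSpace

noncomputable section

/-- if `o_t` satisfies `Σ_{j=1}^{o_t−1} k_j·2^j < t ≤ Σ_{j=1}^{o_t} k_j·2^j`,
then `2^{o_t} ≤ 2·t^{1/(c+1)}`. -/
theorem two_pow_blockIdx_le (c : ℝ) (hc : 1 ≤ c) (t : ℕ) (ht : 1 ≤ t) (o : ℕ)
    (h1 : ∑ j ∈ Finset.Icc 1 (o - 1), kSeq c j * 2 ^ j < t)
    (h2 : t ≤ ∑ j ∈ Finset.Icc 1 o, kSeq c j * 2 ^ j) :
    (2 : ℝ) ^ o ≤ 2 * (t : ℝ) ^ (1 / (c + 1)) := by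
  have hc1 : (0:ℝ) < c + 1 := by linarith
  have ht0 : (1:ℝ) ≤ (t:ℝ) := by exact_mod_cast ht
  have ht1 : (1:ℝ) ≤ (t:ℝ) ^ (1 / (c+1)) :=
    Real.one_le_rpow ht0 (by positivity)
  rcases lt_or_ge o 2 with ho | ho
  · have h2o : (2:ℝ) ^ o ≤ 2 := by interval_cases o <;> norm_num
    nlinarith
  · set a := o - 1 with ha
    have hoa : o = a + 1 := by omega
    have ha1 : 1 ≤ a := by omega
    have hX : (1:ℝ) ≤ (2:ℝ) ^ (c * a) :=
      Real.one_le_rpow one_le_two (by positivity)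
    have hP : (1:ℝ) ≤ (2:ℝ) ^ a := one_le_pow₀ one_le_two
    have hkfloor : 2 * (2:ℝ) ^ (c * a) - 1 ≤ (kSeq c a : ℝ) := by
      unfold kSeq
      linarith [Nat.lt_floor_add_one (2 * (2:ℝ) ^ (c * (a:ℕ)))]
    have hsum : kSeq c a * 2 ^ a ≤ ∑ j ∈ Finset.Icc 1 a, kSeq c j * 2 ^ j :=
      Finset.single_le_sum (f := fun j => kSeq c j * 2 ^ j)
        (fun i _ => Nat.zero_le _) (Finset.mem_Icc.mpr ⟨ha1, le_refl a⟩)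
    have htge : (2:ℝ) ^ (c * a) * 2 ^ a ≤ (t:ℝ) := by
      have h3 : kSeq c a * 2 ^ a + 1 ≤ t := lt_of_le_of_lt hsum h1
      have h4 : ((kSeq c a : ℝ)) * 2 ^ a + 1 ≤ (t:ℝ) := by
        exact_mod_cast h3
      nlinarith [hkfloor, hX, hP, h4]
    have key : (2:ℝ) ^ ((c+1) * (a:ℝ)) ≤ (t:ℝ) := by
      rw [show (c+1) * (a:ℝ) = c * a + a by ring, Real.rpow_add two_pos,
        Real.rpow_natCast]
      exact htge
    have hmono := Real.rpow_le_rpow (by positivity) key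
      (by positivity : (0:ℝ) ≤ 1/(c+1))
    rw [← Real.rpow_mul (by norm_num : (0:ℝ) ≤ 2),
      show (c+1) * (a:ℝ) * (1/(c+1)) = (a:ℝ) by field_simp] at hmono
    rw [hoa, pow_succ, mul_comm, ← Real.rpow_natCast (2:ℝ) a]
    exact mul_le_mul_of_nonneg_left hmono (by norm_num)
end
end

section
/- Suppose α_1,…,α_{k−1} is a primitive stepsize schedule. Let f: ℝ^d → ℝ be convex, differentiable with 1-Lipschitz gradient, and possess a minimizer. Fix any point x_0 with g_0 = ∇f(x_0), let x_1 be arbitrary, and let x_{i+1} = x_i − α_i ∇f(x_i) for 1 ≤ i ≤ k−1, writing f_i = f(x_i) and g_i = ∇f(x_i). Then A_k(f_k − f_0) + ½‖x_k − x_0‖² + C_k‖g_k‖² ≤ ½‖x_1 − x_0‖² + Σ_{i=1}^{k−1} α_i⟨g_i, g_0⟩ − (A_k/2)‖g_0‖². -/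
open Finset
open scoped RealInnerProductSpace

noncomputable section

section Helpers

variable {E : Type*} [NormedAddCommGroup E] [InnerProductSpace ℝ E] [CompleteSpace E]

lemma lineHasDerivAt {f : E → ℝ} {g : E → E} (hgrad : ∀ y, HasGradientAt f (g y) y)
    (a b : E) (t : ℝ) :
    HasDerivAt (fun s : ℝ => f (a + s • (b - a))) ⟪g (a + t • (b - a)), b - a⟫ t := by
  have hu : HasDerivAt (fun s : ℝ => a + s • (b - a)) (b - a) t := by
    simpa using ((hasDerivAt_id t).smul_const (b - a)).const_add a
  have h2 := (hasGradientAt_iff_hasFDerivAt.mp (hgrad (a + t • (b - a)))).comp_hasDerivAt t hu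
  simpa [InnerProductSpace.toDual_apply_apply, Function.comp_def] using h2

lemma convex_lower {f : E → ℝ} {g : E → E} (hconv : ConvexOn ℝ Set.univ f)
    (hgrad : ∀ y, HasGradientAt f (g y) y) (a b : E) :
    f a + ⟪g a, b - a⟫ ≤ f b := by
  set h : ℝ → ℝ := fun s : ℝ => f (a + s • (b - a)) with hh
  have hch : ConvexOn ℝ Set.univ h := by
    have := hconv.comp_affineMap (AffineMap.lineMap a b : ℝ →ᵃ[ℝ] E)
    simpa [hh, Function.comp_def, AffineMap.lineMap_apply, add_comm, vsub_eq_sub,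
      vadd_eq_add] using this
  have hd := lineHasDerivAt hgrad a b 0
  have := hch.le_slope_of_hasDerivAt (Set.mem_univ (0:ℝ)) (Set.mem_univ (1:ℝ)) one_pos
    (by simpa using hd)
  have hs : slope h 0 1 = f b - f a := by
    simp [slope_def_field, hh]
  rw [hs] at this
  simpa [hh] using by linarith [this]

lemma descent_lemma {f : E → ℝ} {g : E → E} (hgrad : ∀ y, HasGradientAt f (g y) y)
    (hlip : LipschitzWith 1 g) (a b : E) :
    f b ≤ f a + ⟪g a, b - a⟫ + 2⁻¹ * ‖b - a‖ ^ 2 := by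
  have hcont : Continuous fun t : ℝ => ⟪g (a + t • (b - a)), b - a⟫ := by
    exact (hlip.continuous.comp (by continuity)).inner continuous_const
  have hint : (∫ t in (0:ℝ)..1, ⟪g (a + t • (b - a)), b - a⟫) = f b - f a := by
    rw [intervalIntegral.integral_eq_sub_of_hasDerivAt
      (fun t _ => lineHasDerivAt hgrad a b t) (hcont.intervalIntegrable 0 1)]
    simp
  have hbound : ∀ t ∈ Set.Icc (0:ℝ) 1,
      ⟪g (a + t • (b - a)), b - a⟫ ≤ ⟪g a, b - a⟫ + t * ‖b - a‖ ^ 2 := by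
    intro t ht
    have h1 : ⟪g (a + t • (b - a)) - g a, b - a⟫ ≤ ‖g (a + t • (b - a)) - g a‖ * ‖b - a‖ :=
      real_inner_le_norm _ _
    have h2 : ‖g (a + t • (b - a)) - g a‖ ≤ t * ‖b - a‖ := by
      have := hlip.dist_le_mul (a + t • (b - a)) a
      simp only [NNReal.coe_one, one_mul, dist_eq_norm] at this
      calc ‖g (a + t • (b - a)) - g a‖ ≤ ‖a + t • (b - a) - a‖ := this
        _ = |t| * ‖b - a‖ := by rw [add_sub_cancel_left, norm_smul, Real.norm_eq_abs]
        _ = t * ‖b - a‖ := by rw [abs_of_nonneg ht.1]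
    have h3 : ‖g (a + t • (b - a)) - g a‖ * ‖b - a‖ ≤ t * ‖b - a‖ * ‖b - a‖ :=
      mul_le_mul_of_nonneg_right h2 (norm_nonneg _)
    rw [inner_sub_left] at h1
    nlinarith [sq_nonneg ‖b - a‖]
  have hmono : (∫ t in (0:ℝ)..1, ⟪g (a + t • (b - a)), b - a⟫)
      ≤ ∫ t in (0:ℝ)..1, (⟪g a, b - a⟫ + t * ‖b - a‖ ^ 2) := by
    apply intervalIntegral.integral_mono_on zero_le_one (hcont.intervalIntegrable 0 1)
      ((continuous_const.add (continuous_id'.mul continuous_const)).intervalIntegrable 0 1)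
      hbound
  have hval : (∫ t in (0:ℝ)..1, (⟪g a, b - a⟫ + t * ‖b - a‖ ^ 2))
      = ⟪g a, b - a⟫ + 2⁻¹ * ‖b - a‖ ^ 2 := by
    rw [intervalIntegral.integral_add (intervalIntegrable_const)
      (by exact (continuous_id'.mul continuous_const).intervalIntegrable 0 1 :
        IntervalIntegrable (fun t : ℝ => t * ‖b - a‖ ^ 2) MeasureTheory.volume 0 1),
      intervalIntegral.integral_mul_const, integral_id]
    norm_num
  linarith [hmono, hint.symm.le, hval.le]

lemma cocoercivity {f : E → ℝ} {g : E → E} (hconv : ConvexOn ℝ Set.univ f)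
    (hgrad : ∀ y, HasGradientAt f (g y) y) (hlip : LipschitzWith 1 g) (a b : E) :
    f a + ⟪g a, b - a⟫ + 2⁻¹ * ‖g b - g a‖ ^ 2 ≤ f b := by
  set c := b - (g b - g a) with hc
  have h1 := convex_lower hconv hgrad a c
  have h2 := descent_lemma hgrad hlip b c
  have hcb : c - b = -(g b - g a) := by rw [hc]; abel
  rw [hcb] at h2
  have hca : c - a = (b - a) - (g b - g a) := by rw [hc]; abel
  rw [hca, inner_sub_right] at h1
  have e1 : ⟪g b, -(g b - g a)⟫ = -⟪g b, g b - g a⟫ := by rw [inner_neg_right]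
  rw [e1] at h2
  have e2 : ⟪g b, g b - g a⟫ - ⟪g a, g b - g a⟫ = ‖g b - g a‖ ^ 2 := by
    rw [← inner_sub_left, real_inner_self_eq_norm_sq]
  have e3 : ‖-(g b - g a)‖ ^ 2 = ‖g b - g a‖ ^ 2 := by rw [norm_neg]
  rw [e3] at h2
  nlinarith [h1, h2, e2]

end Helpers

lemma gdIter_nil {E : Type*} [AddCommGroup E] [SMul ℝ E] (g : E → E) (x : E) :
    gdIter g x [] = x := rfl

lemma gdIter_cons {E : Type*} [AddCommGroup E] [SMul ℝ E] (g : E → E) (x : E) (a : ℝ)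
    (L : List ℝ) : gdIter g x (a :: L) = gdIter g (x - a • g x) L := rfl

lemma gdIter_eq {E : Type*} [AddCommGroup E] [SMul ℝ E] (g : E → E) (x : E) (L : List ℝ) :
    gdIter g x L = x - ∑ i : Fin L.length, L.get i • g (gdIter g x (L.take i.1)) := by
  induction L generalizing x with
  | nil => simp [gdIter_nil]
  | cons a L ih =>
    rw [gdIter_cons, ih]
    simp [Fin.sum_univ_succ, gdIter_nil, gdIter_cons, List.take_succ_cons, sub_sub]

/-- the anchored inequality for a primitive schedule, relative to an
arbitrary anchor point `x₀` (with `g₀ = ∇f(x₀)`) and arbitrary starting point `x₁`. -/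
theorem primitive_anchored_inequality (L : List ℝ) (hL : IsPrimitive L)
    (d : ℕ) (f : EuclideanSpace ℝ (Fin d) → ℝ)
    (g : EuclideanSpace ℝ (Fin d) → EuclideanSpace ℝ (Fin d))
    (hconv : ConvexOn ℝ Set.univ f)
    (hgrad : ∀ y, HasGradientAt f (g y) y)
    (hlip : LipschitzWith 1 g)
    (hmin : ∃ xstar, IsMinOn f Set.univ xstar)
    (x0 x1 : EuclideanSpace ℝ (Fin d)) :
    L.sum * (f (gdIter g x1 L) - f x0)
      + 2⁻¹ * ‖gdIter g x1 L - x0‖ ^ 2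
      + (L.sum * (L.sum + 1) / 2) * ‖g (gdIter g x1 L)‖ ^ 2
    ≤ 2⁻¹ * ‖x1 - x0‖ ^ 2
      + (∑ i : Fin L.length, L.get i * ⟪g (gdIter g x1 (L.take i.1)), g x0⟫)
      - L.sum / 2 * ‖g x0‖ ^ 2 := by
  obtain ⟨xstar, hxs⟩ := hmin
  have hP := hL.2 d f g hconv hgrad hlip xstar hxs x1
  have hα : ∀ i : Fin L.length, 0 < L.get i := fun i => hL.1 _ (List.get_mem L i)
  have hQ : ∑ i : Fin L.length, L.get i *
      (f (gdIter g x1 (L.take i.1))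
        + ⟪g (gdIter g x1 (L.take i.1)), x0 - gdIter g x1 (L.take i.1)⟫
        + 2⁻¹ * ‖g x0 - g (gdIter g x1 (L.take i.1))‖ ^ 2 - f x0) ≤ 0 := by
    apply Finset.sum_nonpos
    intro i _
    have hco := cocoercivity hconv hgrad hlip (gdIter g x1 (L.take i.1)) x0
    have h2 : f (gdIter g x1 (L.take i.1))
        + ⟪g (gdIter g x1 (L.take i.1)), x0 - gdIter g x1 (L.take i.1)⟫
        + 2⁻¹ * ‖g x0 - g (gdIter g x1 (L.take i.1))‖ ^ 2 - f x0 ≤ 0 := by linarith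
    exact mul_nonpos_iff.mpr (Or.inl ⟨(hα i).le, h2⟩)
  have hS : L.sum = ∑ i : Fin L.length, L.get i := by
    simp [List.get_eq_getElem]
  have hE2 : ⟪gdIter g x1 L - x1, xstar - x0⟫
      = -∑ i : Fin L.length, L.get i * ⟪g (gdIter g x1 (L.take i.1)), xstar - x0⟫ := by
    rw [show gdIter g x1 L - x1
        = -∑ i : Fin L.length, L.get i • g (gdIter g x1 (L.take i.1)) by
      rw [gdIter_eq g x1 L]; abel]
    rw [inner_neg_left, sum_inner]
    simp_rw [real_inner_smul_left]
  have hE1 : 2⁻¹ * ‖gdIter g x1 L - x0‖ ^ 2 - 2⁻¹ * ‖gdIter g x1 L - xstar‖ ^ 2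
      - 2⁻¹ * ‖x1 - x0‖ ^ 2 + 2⁻¹ * ‖x1 - xstar‖ ^ 2
      = ⟪gdIter g x1 L - x1, xstar - x0⟫ := by
    have e1 := @norm_sub_sq_real _ _ _ (gdIter g x1 L) x0
    have e2 := @norm_sub_sq_real _ _ _ (gdIter g x1 L) xstar
    have e3 := @norm_sub_sq_real _ _ _ x1 x0
    have e4 := @norm_sub_sq_real _ _ _ x1 xstar
    rw [inner_sub_left, inner_sub_right, inner_sub_right]
    linarith
  have hEsum : (∑ i : Fin L.length, L.get i *
        (f (gdIter g x1 (L.take i.1)) - f xstar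
          - ⟪g (gdIter g x1 (L.take i.1)), gdIter g x1 (L.take i.1) - xstar⟫
          + 2⁻¹ * ‖g (gdIter g x1 (L.take i.1))‖ ^ 2))
      - (∑ i : Fin L.length, L.get i *
          (f (gdIter g x1 (L.take i.1))
            + ⟪g (gdIter g x1 (L.take i.1)), x0 - gdIter g x1 (L.take i.1)⟫
            + 2⁻¹ * ‖g x0 - g (gdIter g x1 (L.take i.1))‖ ^ 2 - f x0))
      - (∑ i : Fin L.length, L.get i * ⟪g (gdIter g x1 (L.take i.1)), xstar - x0⟫)
      - (∑ i : Fin L.length, L.get i * ⟪g (gdIter g x1 (L.take i.1)), g x0⟫)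
      + L.sum / 2 * ‖g x0‖ ^ 2 + L.sum * f xstar - L.sum * f x0 = 0 := by
    rw [hS]
    simp only [Finset.sum_div, Finset.sum_mul, ← Finset.sum_sub_distrib,
      ← Finset.sum_add_distrib]
    apply Finset.sum_eq_zero
    intro i _
    have n1 := @norm_sub_sq_real _ _ _ (g x0) (g (gdIter g x1 (L.take i.1)))
    have c1 := real_inner_comm (g x0) (g (gdIter g x1 (L.take i.1)))
    simp only [inner_sub_right]
    rw [n1, c1]
    ring
  linarith [hP, hQ, hE1, hE2, hEsum]
end
end

section
/- Suppose α_1,…,α_{k−1} is a primitive stepsize schedule. Let f: ℝ^d → ℝ be convex, differentiable with 1-Lipschitz gradient, and possess a minimizer. Fix x_0, set g_0 = ∇f(x_0), let x_1 = x_0 − α_0 g_0 for some α_0 ≥ 0, and run gradient descent x_{i+1} = x_i − α_i ∇f(x_i) for 1 ≤ i ≤ k−1, writing g_k = ∇f(x_k). Then C_k‖g_k‖² ≤ (α_0²/2 + (A_k+1)²/2 − α_0 − A_k/2)·‖g_0‖². -/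
open Finset
open scoped RealInnerProductSpace

noncomputable section

section AuxLemmas

variable {E : Type*} [NormedAddCommGroup E] [InnerProductSpace ℝ E] [CompleteSpace E]

/-- Derivative of `f` along a line, from the gradient. -/
lemma hasDerivAt_line_aux (f : E → ℝ) (g : E → E) (hgrad : ∀ y, HasGradientAt f (g y) y)
    (u v : E) (t : ℝ) :
    HasDerivAt (fun s : ℝ => f (v + s • (u - v))) ⟪g (v + t • (u - v)), u - v⟫ t := by
  have hline : HasDerivAt (fun s : ℝ => v + s • (u - v)) (u - v) t := by
    simpa using ((hasDerivAt_id t).smul_const (u - v)).const_add v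
  have h := (hgrad (v + t • (u - v))).hasFDerivAt.comp_hasDerivAt t hline
  simpa [InnerProductSpace.toDual_apply_apply, Function.comp_def] using h

omit [CompleteSpace E] in
lemma convexOn_line_aux (f : E → ℝ) (hconv : ConvexOn ℝ Set.univ f) (u v : E) :
    ConvexOn ℝ Set.univ (fun s : ℝ => f (v + s • (u - v))) := by
  have h := hconv.comp_affineMap (AffineMap.lineMap v u : ℝ →ᵃ[ℝ] E)
  have he : (fun s : ℝ => f (v + s • (u - v))) = f ∘ (AffineMap.lineMap v u : ℝ →ᵃ[ℝ] E) := by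
    funext s
    simp [AffineMap.lineMap_apply, add_comm]
  rw [he]
  simpa using h

/-- Gradient inequality for convex functions. -/
lemma convex_grad_ineq_aux (f : E → ℝ) (g : E → E) (hconv : ConvexOn ℝ Set.univ f)
    (hgrad : ∀ y, HasGradientAt f (g y) y) (u v : E) :
    f v + ⟪g v, u - v⟫ ≤ f u := by
  have hφ := convexOn_line_aux f hconv u v
  have hd := hasDerivAt_line_aux f g hgrad u v 0
  have h := hφ.le_slope_of_hasDerivAt (Set.mem_univ 0) (Set.mem_univ 1) one_pos (by simpa using hd)
  rw [slope_def_field] at h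
  simp only [zero_smul, add_zero, one_smul, add_sub_cancel, sub_zero, div_one] at h
  linarith

/-- Descent lemma for 1-smooth functions. -/
lemma descent_lemma_aux (f : E → ℝ) (g : E → E) (hgrad : ∀ y, HasGradientAt f (g y) y)
    (hlip : LipschitzWith 1 g) (u v : E) :
    f u ≤ f v + ⟪g v, u - v⟫ + 2⁻¹ * ‖u - v‖ ^ 2 := by
  set χ : ℝ → ℝ := fun t => f (v + t • (u - v)) - t * ⟪g v, u - v⟫ - t ^ 2 * (2⁻¹ * ‖u - v‖ ^ 2)
    with hχdef
  have hχ : ∀ t : ℝ, HasDerivAt χ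
      (⟪g (v + t • (u - v)), u - v⟫ - ⟪g v, u - v⟫ - 2 * t * (2⁻¹ * ‖u - v‖ ^ 2)) t := by
    intro t
    have h1 := hasDerivAt_line_aux f g hgrad u v t
    have h2 : HasDerivAt (fun s : ℝ => s * ⟪g v, u - v⟫) ⟪g v, u - v⟫ t := by
      simpa using (hasDerivAt_id t).mul_const (⟪g v, u - v⟫)
    have h3 : HasDerivAt (fun s : ℝ => s ^ 2 * (2⁻¹ * ‖u - v‖ ^ 2))
        (2 * t * (2⁻¹ * ‖u - v‖ ^ 2)) t := by
      have := (hasDerivAt_pow 2 t).mul_const (2⁻¹ * ‖u - v‖ ^ 2)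
      simpa [mul_comm, mul_assoc] using this
    exact (h1.sub h2).sub h3
  have hderiv_nonpos : ∀ t ∈ interior (Set.Icc (0:ℝ) 1), deriv χ t ≤ 0 := by
    intro t ht
    rw [interior_Icc, Set.mem_Ioo] at ht
    rw [(hχ t).deriv]
    have hineq : ⟪g (v + t • (u - v)) - g v, u - v⟫ ≤ t * ‖u - v‖ ^ 2 := by
      calc ⟪g (v + t • (u - v)) - g v, u - v⟫ ≤ ‖g (v + t • (u - v)) - g v‖ * ‖u - v‖ :=
            real_inner_le_norm _ _
        _ ≤ ‖(v + t • (u - v)) - v‖ * ‖u - v‖ := by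
            gcongr
            have := hlip.dist_le_mul (v + t • (u - v)) v
            simpa [dist_eq_norm] using this
        _ = t * ‖u - v‖ ^ 2 := by
            rw [add_sub_cancel_left, norm_smul, Real.norm_eq_abs, abs_of_pos ht.1]
            ring
    rw [inner_sub_left] at hineq
    nlinarith [hineq]
  have hanti : AntitoneOn χ (Set.Icc (0:ℝ) 1) := by
    apply antitoneOn_of_deriv_nonpos (convex_Icc 0 1)
    · exact fun t _ => ((hχ t).differentiableAt).continuousAt.continuousWithinAt
    · exact fun t _ => ((hχ t).differentiableAt).differentiableWithinAt
    · exact hderiv_nonpos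
  have h01 := hanti (Set.mem_Icc.mpr ⟨le_refl 0, zero_le_one⟩)
    (Set.mem_Icc.mpr ⟨zero_le_one, le_refl 1⟩) zero_le_one
  simp only [hχdef, zero_smul, add_zero, one_smul, zero_mul, sub_zero, one_mul,
    zero_pow, one_pow, add_sub_cancel] at h01
  linarith

omit [CompleteSpace E] in
lemma inner_convexOn_aux (c : E) : ConvexOn ℝ Set.univ (fun x : E => ⟪c, x⟫) := by
  constructor
  · exact convex_univ
  · intro x _ y _ a b _ _ _
    simp [inner_add_right, real_inner_smul_right]

lemma hasGradientAt_add_inner_aux (f : E → ℝ) (g : E → E)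
    (hgrad : ∀ y, HasGradientAt f (g y) y) (c : E) (y : E) :
    HasGradientAt (fun x => f x + ⟪c, x⟫) (g y + c) y := by
  rw [hasGradientAt_iff_hasFDerivAt, map_add]
  have h2 : HasFDerivAt (fun x : E => ⟪c, x⟫) (InnerProductSpace.toDual ℝ E c) y := by
    have := (innerSL ℝ c).hasFDerivAt (x := y)
    apply this.congr_fderiv
    ext w
    simp [InnerProductSpace.toDual_apply_apply]
  exact ((hgrad y).hasFDerivAt).add h2

/-- Interpolation inequality for 1-smooth convex functions. -/
lemma interp_ineq_aux (f : E → ℝ) (g : E → E) (hconv : ConvexOn ℝ Set.univ f)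
    (hgrad : ∀ y, HasGradientAt f (g y) y) (hlip : LipschitzWith 1 g) (u v : E) :
    f u + ⟪g u, v - u⟫ + 2⁻¹ * ‖g u - g v‖ ^ 2 ≤ f v := by
  set c : E := -(g u) with hc
  set h : E → ℝ := fun x => f x + ⟪c, x⟫ with hh
  set gh : E → E := fun y => g y + c with hgh
  have hconv' : ConvexOn ℝ Set.univ h := hconv.add (inner_convexOn_aux c)
  have hgrad' : ∀ y, HasGradientAt h (gh y) y := fun y => hasGradientAt_add_inner_aux f g hgrad c y
  have hlip' : LipschitzWith 1 gh := by
    intro x y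
    simp only [hgh, edist_add_right]
    exact hlip x y
  have hmin : ∀ w : E, h u ≤ h w := by
    intro w
    have := convex_grad_ineq_aux h gh hconv' hgrad' w u
    have hz : gh u = 0 := by simp [hgh, hc]
    rw [hz] at this
    simpa using this
  have hdesc := descent_lemma_aux h gh hgrad' hlip' (v - (g v - g u)) v
  have he1 : v - (g v - g u) - v = -(g v - g u) := by abel
  rw [he1] at hdesc
  have he2 : gh v = g v - g u := by simp [hgh, hc]; abel
  rw [he2] at hdesc
  have he3 : ⟪g v - g u, -(g v - g u)⟫ = -‖g v - g u‖ ^ 2 := by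
    rw [inner_neg_right, real_inner_self_eq_norm_sq]
  have he4 : ‖-(g v - g u)‖ ^ 2 = ‖g v - g u‖ ^ 2 := by rw [norm_neg]
  rw [he3, he4] at hdesc
  have hchain : h u ≤ h v - 2⁻¹ * ‖g v - g u‖ ^ 2 := by
    have h9 := hmin (v - (g v - g u))
    exact le_trans h9 (by linarith [hdesc])
  simp only [hh, hc, inner_neg_left] at hchain
  have he5 : ⟪g u, v - u⟫ = ⟪g u, v⟫ - ⟪g u, u⟫ := inner_sub_right _ _ _
  have he6 : ‖g u - g v‖ ^ 2 = ‖g v - g u‖ ^ 2 := by rw [norm_sub_rev]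
  linarith [hchain]

end AuxLemmas

/-- Telescoping identity for gradient descent. -/
lemma gdIter_telescope {E : Type*} [AddCommGroup E] [Module ℝ E] (g : E → E) :
    ∀ (L : List ℝ) (x : E),
      x - gdIter g x L = ∑ i : Fin L.length, L.get i • g (gdIter g x (L.take i.1))
  | [], x => by simp [gdIter]
  | a :: L, x => by
    show x - gdIter g x (a :: L)
      = ∑ i : Fin (L.length + 1), (a :: L).get i • g (gdIter g x (List.take (↑i) (a :: L)))
    rw [Fin.sum_univ_succ]
    show x - gdIter g (x - a • g x) L
      = a • g x + ∑ i : Fin L.length, L.get i • g (gdIter g (x - a • g x) (L.take i.1))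
    rw [← gdIter_telescope g L (x - a • g x)]
    abel

set_option maxHeartbeats 2000000 in
/-- gradient-norm control at the last step of a primitive schedule,
when the starting point is `x₁ = x₀ − α₀·g₀`. -/
theorem primitive_last_gradient_bound (L : List ℝ) (hL : IsPrimitive L)
    (d : ℕ) (f : EuclideanSpace ℝ (Fin d) → ℝ)
    (g : EuclideanSpace ℝ (Fin d) → EuclideanSpace ℝ (Fin d))
    (hconv : ConvexOn ℝ Set.univ f)
    (hgrad : ∀ y, HasGradientAt f (g y) y)
    (hlip : LipschitzWith 1 g)
    (hmin : ∃ xstar, IsMinOn f Set.univ xstar)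
    (x0 : EuclideanSpace ℝ (Fin d)) (α0 : ℝ) (hα0 : 0 ≤ α0) :
    (L.sum * (L.sum + 1) / 2) * ‖g (gdIter g (x0 - α0 • g x0) L)‖ ^ 2 ≤
      (α0 ^ 2 / 2 + (L.sum + 1) ^ 2 / 2 - α0 - L.sum / 2) * ‖g x0‖ ^ 2 := by
  obtain ⟨hpos, hP⟩ := hL
  obtain ⟨xs, hxs⟩ := hmin
  set x1 : EuclideanSpace ℝ (Fin d) := x0 - α0 • g x0 with hx1
  set xk : EuclideanSpace ℝ (Fin d) := gdIter g x1 L with hxk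
  set A : ℝ := L.sum with hA
  have hA0 : (0:ℝ) ≤ A := by
    rw [hA]; exact List.sum_nonneg fun a ha => (hpos a ha).le
  set z : EuclideanSpace ℝ (Fin d) := x0 - g x0 with hz
  set φ : ℝ := f x0 - 2⁻¹ * ‖g x0‖ ^ 2 with hφ
  have key := hP d f g hconv hgrad hlip xs hxs x1
  have htel : x1 - xk = ∑ i : Fin L.length, L.get i • g (gdIter g x1 (L.take i.1)) := by
    rw [hxk]; exact gdIter_telescope g L x1
  have hsumget : ∑ i : Fin L.length, L.get i = A := by
    rw [hA]
    simpa [List.get_eq_getElem] using Fin.sum_univ_get L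
  have hsplit : ∑ i : Fin L.length,
        L.get i *
          (f (gdIter g x1 (L.take i.1)) - f xs
            - ⟪g (gdIter g x1 (L.take i.1)), gdIter g x1 (L.take i.1) - xs⟫
            + 2⁻¹ * ‖g (gdIter g x1 (L.take i.1))‖ ^ 2)
      = (∑ i : Fin L.length,
          L.get i *
            (f (gdIter g x1 (L.take i.1)) - φ
              - ⟪g (gdIter g x1 (L.take i.1)), gdIter g x1 (L.take i.1) - z⟫
              + 2⁻¹ * ‖g (gdIter g x1 (L.take i.1))‖ ^ 2))
        + A * (φ - f xs) + ⟪x1 - xk, xs - z⟫ := by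
    rw [htel, ← hsumget, sum_inner, Finset.sum_mul, ← Finset.sum_add_distrib,
      ← Finset.sum_add_distrib]
    refine Finset.sum_congr rfl fun i _ => ?_
    rw [real_inner_smul_left]
    simp only [inner_sub_right]
    ring
  rw [hsplit] at key
  have hterm : ∀ i : Fin L.length,
      f (gdIter g x1 (L.take i.1)) - φ
        - ⟪g (gdIter g x1 (L.take i.1)), gdIter g x1 (L.take i.1) - z⟫
        + 2⁻¹ * ‖g (gdIter g x1 (L.take i.1))‖ ^ 2 ≤ 0 := by
    intro i
    set w : EuclideanSpace ℝ (Fin d) := gdIter g x1 (L.take i.1) with hw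
    have h4 := interp_ineq_aux f g hconv hgrad hlip w x0
    have e1 : ⟪g w, w - z⟫ = ⟪g w, w - x0⟫ + ⟪g w, g x0⟫ := by
      rw [← inner_add_right]; congr 1; rw [hz]; abel
    have e2 : ‖g w - g x0‖ ^ 2 = ‖g w‖ ^ 2 - 2 * ⟪g w, g x0⟫ + ‖g x0‖ ^ 2 :=
      norm_sub_sq_real _ _
    have e3 : ⟪g w, x0 - w⟫ = -⟪g w, w - x0⟫ := by
      rw [← inner_neg_right]; congr 1; abel
    rw [e3, e2] at h4
    rw [hφ, e1]
    linarith
  have hS1 : ∑ i : Fin L.length,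
      L.get i *
        (f (gdIter g x1 (L.take i.1)) - φ
          - ⟪g (gdIter g x1 (L.take i.1)), gdIter g x1 (L.take i.1) - z⟫
          + 2⁻¹ * ‖g (gdIter g x1 (L.take i.1))‖ ^ 2) ≤ 0 := by
    refine Finset.sum_nonpos fun i _ => ?_
    have hgi : (0:ℝ) ≤ L.get i := le_of_lt (hpos _ (List.get_mem L i))
    have := mul_le_mul_of_nonneg_left (hterm i) hgi
    simpa using this
  have key2 : A * (f xk - φ) + A * (A + 1) / 2 * ‖g xk‖ ^ 2 + 2⁻¹ * ‖xk - z‖ ^ 2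
      ≤ 2⁻¹ * ‖x1 - z‖ ^ 2 := by
    have E1a : ‖x1 - xs‖ ^ 2 = ‖x1‖ ^ 2 - 2 * ⟪x1, xs⟫ + ‖xs‖ ^ 2 := norm_sub_sq_real _ _
    have E1b : ‖xk - xs‖ ^ 2 = ‖xk‖ ^ 2 - 2 * ⟪xk, xs⟫ + ‖xs‖ ^ 2 := norm_sub_sq_real _ _
    have E1c : ‖x1 - z‖ ^ 2 = ‖x1‖ ^ 2 - 2 * ⟪x1, z⟫ + ‖z‖ ^ 2 := norm_sub_sq_real _ _
    have E1d : ‖xk - z‖ ^ 2 = ‖xk‖ ^ 2 - 2 * ⟪xk, z⟫ + ‖z‖ ^ 2 := norm_sub_sq_real _ _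
    have E1e : ⟪x1 - xk, xs - z⟫ = ⟪x1, xs⟫ - ⟪x1, z⟫ - ⟪xk, xs⟫ + ⟪xk, z⟫ := by
      simp only [inner_sub_left, inner_sub_right]; ring
    linarith [key, hS1]
  have h5 := interp_ineq_aux f g hconv hgrad hlip x0 xk
  have hT : ⟪g x0, xk - x0⟫ = ⟪g x0, xk - z⟫ - ‖g x0‖ ^ 2 := by
    rw [← real_inner_self_eq_norm_sq, ← inner_sub_right]
    congr 1
    rw [hz]; abel
  rw [hT] at h5
  have h5' : ⟪g x0, xk - z⟫ - 2⁻¹ * ‖g x0‖ ^ 2 + 2⁻¹ * ‖g x0 - g xk‖ ^ 2 ≤ f xk - φ := by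
    rw [hφ]; linarith
  have h5A := mul_le_mul_of_nonneg_left h5' hA0
  have hAR : (0:ℝ) ≤ A * ‖g x0 - g xk‖ ^ 2 := mul_nonneg hA0 (sq_nonneg _)
  have e3 : (0:ℝ) ≤ ‖xk - z‖ ^ 2 + 2 * (A * ⟪g x0, xk - z⟫) + A ^ 2 * ‖g x0‖ ^ 2 := by
    have h := norm_add_sq_real (xk - z) (A • g x0)
    have h1 : ⟪xk - z, A • g x0⟫ = A * ⟪g x0, xk - z⟫ := by
      rw [real_inner_smul_right, real_inner_comm]
    have h2 : ‖A • g x0‖ ^ 2 = A ^ 2 * ‖g x0‖ ^ 2 := by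
      rw [norm_smul, mul_pow, Real.norm_eq_abs, sq_abs]
    have h3 : (0:ℝ) ≤ ‖xk - z + A • g x0‖ ^ 2 := sq_nonneg _
    rw [h, h1, h2] at h3
    linarith
  have e2 : ‖x1 - z‖ ^ 2 = (1 - α0) ^ 2 * ‖g x0‖ ^ 2 := by
    have hv : x1 - z = (1 - α0) • g x0 := by
      rw [hx1, hz, sub_smul, one_smul]; abel
    rw [hv, norm_smul, mul_pow, Real.norm_eq_abs, sq_abs]
  rw [e2] at key2
  have hmul := mul_nonneg hA0 hA0
  nlinarith [key2, h5A, hAR, e3]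
end
end

section
/- Suppose α_1,…,α_{k−1} is a primitive stepsize schedule with k ≥ 2 (so A_k > 0). Let f: ℝ^d → ℝ be convex, differentiable with 1-Lipschitz gradient, and possess a minimizer. Fix x_0, set g_0 = ∇f(x_0), let x_1 = x_0 − α_0 g_0 for some α_0 ≥ 0, and run gradient descent x_{i+1} = x_i − α_i ∇f(x_i) for 1 ≤ i ≤ k−1. Then f(x_k) − f(x_0) ≤ (1/A_k)·(½α_0² − A_k/2 − α_0 + ½)·‖g_0‖². -/
open Finset
open scoped RealInnerProductSpace

noncomputable section

section Helpers

variable {E : Type*} [NormedAddCommGroup E] [InnerProductSpace ℝ E] [CompleteSpace E]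
variable {f : E → ℝ} {g : E → E}

lemma gd_lineDeriv (hgrad : ∀ y, HasGradientAt f (g y) y) (x v : E) (t : ℝ) :
    HasDerivAt (fun s : ℝ => f (x + s • v)) ⟪g (x + t • v), v⟫ t := by
  have h1 : HasDerivAt (fun s : ℝ => x + s • v) v t := by
    simpa using ((hasDerivAt_id t).smul_const v).const_add x
  have h2 : HasFDerivAt f (InnerProductSpace.toDual ℝ E (g (x + t • v))) (x + t • v) :=
    (hasGradientAt_iff_hasFDerivAt.mp (hgrad (x + t • v)))
  have h3 := h2.comp_hasDerivAt t h1
  simp only [InnerProductSpace.toDual_apply_apply] at h3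
  exact h3

lemma gd_subgrad (hconv : ConvexOn ℝ Set.univ f) (hgrad : ∀ y, HasGradientAt f (g y) y)
    (x z : E) : f x + ⟪g x, z - x⟫ ≤ f z := by
  have hφ : ConvexOn ℝ Set.univ (fun t : ℝ => f (x + t • (z - x))) := by
    have := hconv.comp_affineMap (AffineMap.lineMap x z)
    refine ConvexOn.congr (by simpa using this) ?_
    intro t _
    simp [AffineMap.lineMap_apply, add_comm]
  have hd : HasDerivAt (fun t : ℝ => f (x + t • (z - x))) ⟪g x, z - x⟫ 0 := by
    simpa using gd_lineDeriv hgrad x (z - x) 0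
  have := hφ.le_slope_of_hasDerivAt (Set.mem_univ 0) (Set.mem_univ 1) one_pos hd
  rw [slope_def_field] at this
  simp only [zero_smul, add_zero, one_smul] at this
  have hz : x + (z - x) = z := by abel
  rw [hz] at this
  linarith [this]

lemma gd_descent (hgrad : ∀ y, HasGradientAt f (g y) y) (hlip : LipschitzWith 1 g)
    (x v : E) : f (x + v) ≤ f x + ⟪g x, v⟫ + ‖v‖ ^ 2 / 2 := by
  have hcont : Continuous fun t : ℝ => ⟪g (x + t • v), v⟫ := by
    apply Continuous.inner
    · exact hlip.continuous.comp (by continuity)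
    · exact continuous_const
  have hftc : ∫ t in (0:ℝ)..1, ⟪g (x + t • v), v⟫ = f (x + v) - f x := by
    have := intervalIntegral.integral_eq_sub_of_hasDerivAt
      (f := fun s : ℝ => f (x + s • v)) (f' := fun t : ℝ => ⟪g (x + t • v), v⟫)
      (a := 0) (b := 1)
      (fun t _ => gd_lineDeriv hgrad x v t) (hcont.intervalIntegrable 0 1)
    simpa using this
  have hmono : ∫ t in (0:ℝ)..1, ⟪g (x + t • v), v⟫
      ≤ ∫ t in (0:ℝ)..1, (⟪g x, v⟫ + t * ‖v‖ ^ 2) := by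
    apply intervalIntegral.integral_mono_on (by norm_num)
      (hcont.intervalIntegrable 0 1)
      (((continuous_const.add (continuous_id.mul continuous_const)).intervalIntegrable 0 1))
    intro t ht
    show ⟪g (x + t • v), v⟫ ≤ ⟪g x, v⟫ + t * ‖v‖ ^ 2
    have hge : ⟪g (x + t • v) - g x, v⟫ ≤ t * ‖v‖ ^ 2 := by
      calc ⟪g (x + t • v) - g x, v⟫ ≤ ‖g (x + t • v) - g x‖ * ‖v‖ :=
            real_inner_le_norm _ _
        _ ≤ ‖t • v‖ * ‖v‖ := by
            have := hlip.dist_le_mul (x + t • v) x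
            simp only [NNReal.coe_one, one_mul, dist_eq_norm] at this
            have h2 : x + t • v - x = t • v := by abel
            rw [h2] at this
            exact mul_le_mul_of_nonneg_right this (norm_nonneg _)
        _ = t * ‖v‖ ^ 2 := by
            rw [norm_smul, Real.norm_eq_abs, abs_of_nonneg ht.1]; ring
    have := inner_sub_left (𝕜 := ℝ) (g (x + t • v)) (g x) v
    linarith [hge, this.symm.le, this.le]
  have hint : ∫ t in (0:ℝ)..1, (⟪g x, v⟫ + t * ‖v‖ ^ 2) = ⟪g x, v⟫ + ‖v‖ ^ 2 / 2 := by
    have hintg : IntervalIntegrable (fun t : ℝ => t * ‖v‖ ^ 2) MeasureTheory.volume 0 1 := by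
      apply Continuous.intervalIntegrable; continuity
    rw [intervalIntegral.integral_add intervalIntegrable_const hintg,
      intervalIntegral.integral_mul_const]
    simp [integral_id]
    ring
  linarith [hftc, hmono, hint]

lemma gd_interp (hconv : ConvexOn ℝ Set.univ f) (hgrad : ∀ y, HasGradientAt f (g y) y)
    (hlip : LipschitzWith 1 g) (x y : E) :
    f x + ⟪g x, y - x⟫ + ‖g y - g x‖ ^ 2 / 2 ≤ f y := by
  set h : E → ℝ := fun z => f z - ⟪g x, z⟫ with hh
  set gh : E → E := fun z => g z - g x with hgh
  have hgradh : ∀ z, HasGradientAt h (gh z) z := by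
    intro z
    rw [hasGradientAt_iff_hasFDerivAt]
    have h1 : HasFDerivAt (fun z : E => ⟪g x, z⟫) (InnerProductSpace.toDual ℝ E (g x)) z :=
      (InnerProductSpace.toDual ℝ E (g x)).hasFDerivAt
    have h2 := (hasGradientAt_iff_hasFDerivAt.mp (hgrad z)).sub h1
    have h3 : InnerProductSpace.toDual ℝ E (g z) - InnerProductSpace.toDual ℝ E (g x)
        = InnerProductSpace.toDual ℝ E (gh z) := by
      rw [hgh]; simp [map_sub]
    rwa [h3] at h2
  have hconvh : ConvexOn ℝ Set.univ h := by
    refine ⟨convex_univ, fun z _ w _ a b ha hb hab => ?_⟩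
    have h1 := hconv.2 (Set.mem_univ z) (Set.mem_univ w) ha hb hab
    have h2 : ⟪g x, a • z + b • w⟫ = a * ⟪g x, z⟫ + b * ⟪g x, w⟫ := by
      simp [inner_add_right, real_inner_smul_right]
    simp only [smul_eq_mul] at h1
    simp only [hh, smul_eq_mul]
    rw [h2]
    linarith [h1]
  have hliph : LipschitzWith 1 gh := by
    apply LipschitzWith.of_dist_le_mul
    intro z w
    have := hlip.dist_le_mul z w
    simpa [hgh, dist_sub_right] using this
  have hminh : h x ≤ h (y + -(gh y)) := by
    have := gd_subgrad hconvh hgradh x (y + -(gh y))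
    have hx0 : gh x = 0 := by simp [hgh]
    rw [hx0] at this
    simpa using this
  have hdesc := gd_descent hgradh hliph y (-(gh y))
  have hiner : ⟪gh y, -(gh y)⟫ = -‖gh y‖ ^ 2 := by
    rw [inner_neg_right, real_inner_self_eq_norm_sq]
  have hnn : ‖-(gh y)‖ ^ 2 = ‖gh y‖ ^ 2 := by rw [norm_neg]
  rw [hiner, hnn] at hdesc
  have hxy : h x ≤ h y - ‖gh y‖ ^ 2 / 2 := le_trans hminh (by linarith [hdesc])
  have hinner2 : ⟪g x, y - x⟫ = ⟪g x, y⟫ - ⟪g x, x⟫ := by rw [inner_sub_right]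
  simp only [hh, hgh] at hxy ⊢
  linarith [hxy, hinner2.le, hinner2.symm.le]

end Helpers


section Helpers2

variable {E : Type*} [NormedAddCommGroup E] [InnerProductSpace ℝ E]

lemma gd_telescope (g : E → E) :
    ∀ (L : List ℝ) (x1 : E),
      gdIter g x1 L = x1 - ∑ i : Fin L.length, L.get i • g (gdIter g x1 (L.take i.1)) := by
  intro L
  induction L with
  | nil => intro x1; simp [gdIter]
  | cons a L ih =>
    intro x1
    show gdIter g (x1 - a • g x1) L = _
    rw [ih (x1 - a • g x1)]
    simp only [List.length_cons]
    rw [Fin.sum_univ_succ]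
    simp only [List.get_cons_succ, List.length_cons, List.get_cons_zero, List.take_zero,
      List.take_succ_cons, Fin.val_succ, Fin.val_zero]
    show _ = x1 - (a • g (gdIter g x1 []) + _)
    simp only [gdIter, sub_sub]
    congr 1

lemma gd_key (a b c e : E) (t : ℝ) :
    2⁻¹ * ‖a - t • b - e‖ ^ 2 - 2⁻¹ * ‖c - e‖ ^ 2 - ⟪a - t • b - c, a - e⟫ + ⟪b, a - t • b - c⟫
      ≤ (t ^ 2 / 2 - t + 2⁻¹) * ‖b‖ ^ 2 := by
  have h0 : (0:ℝ) ≤ 2⁻¹ * ‖a - b - c‖ ^ 2 := by positivity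
  simp only [← real_inner_self_eq_norm_sq] at h0 ⊢
  simp only [inner_sub_left, inner_sub_right, real_inner_smul_left, real_inner_smul_right]
    at h0 ⊢
  rw [real_inner_comm b a, real_inner_comm c a, real_inner_comm e a, real_inner_comm e b,
    real_inner_comm e c, real_inner_comm c b] at *
  nlinarith [h0]

end Helpers2

/-- objective decrease at the last step of a primitive schedule,
when the starting point is `x₁ = x₀ − α₀·g₀`. -/
theorem primitive_last_value_bound (L : List ℝ) (hL : IsPrimitive L) (hk : L ≠ [])
    (d : ℕ) (f : EuclideanSpace ℝ (Fin d) → ℝ)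
    (g : EuclideanSpace ℝ (Fin d) → EuclideanSpace ℝ (Fin d))
    (hconv : ConvexOn ℝ Set.univ f)
    (hgrad : ∀ y, HasGradientAt f (g y) y)
    (hlip : LipschitzWith 1 g)
    (hmin : ∃ xstar, IsMinOn f Set.univ xstar)
    (x0 : EuclideanSpace ℝ (Fin d)) (α0 : ℝ) (hα0 : 0 ≤ α0) :
    f (gdIter g (x0 - α0 • g x0) L) - f x0 ≤
      (1 / L.sum) * (α0 ^ 2 / 2 - L.sum / 2 - α0 + 1 / 2) * ‖g x0‖ ^ 2 := by
  obtain ⟨hpos, hkey⟩ := hL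
  obtain ⟨xs, hxs⟩ := hmin
  have hP := hkey d f g hconv hgrad hlip xs hxs (x0 - α0 • g x0)
  set g0 := g x0 with hg0
  set x1 : EuclideanSpace ℝ (Fin d) := x0 - α0 • g0 with hx1
  set A := L.sum with hA
  have hApos : 0 < A := List.sum_pos L hpos hk
  set xk := gdIter g x1 L with hxk
  -- per-term bound from the interpolation inequality
  have hterm : ∀ i : Fin L.length,
      f (gdIter g x1 (L.take i.1)) - f xs
        - ⟪g (gdIter g x1 (L.take i.1)), gdIter g x1 (L.take i.1) - xs⟫
        + 2⁻¹ * ‖g (gdIter g x1 (L.take i.1))‖ ^ 2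
      ≤ (f x0 - f xs) - ⟪g (gdIter g x1 (L.take i.1)), x0 - xs⟫
        - ‖g0‖ ^ 2 / 2 + ⟪g0, g (gdIter g x1 (L.take i.1))⟫ := by
    intro i
    set p := gdIter g x1 (L.take i.1) with hp
    have h1 := gd_interp hconv hgrad hlip p x0
    have h2 : ⟪g p, x0 - xs⟫ = ⟪g p, x0 - p⟫ + ⟪g p, p - xs⟫ := by
      rw [← inner_add_right]
      congr 1
      abel
    have h3 : ‖g0 - g p‖ ^ 2 = ‖g0‖ ^ 2 - 2 * ⟪g0, g p⟫ + ‖g p‖ ^ 2 :=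
      norm_sub_sq_real _ _
    rw [← hg0] at h1
    linarith [h1, h2.le, h2.ge, h3.le, h3.ge]
  -- sum of stepsizes as a Fin sum
  have hAsum : A = ∑ i : Fin L.length, L.get i := by
    rw [hA, ← List.sum_ofFn, List.ofFn_get]
  -- telescoping
  have hS : (∑ i : Fin L.length, L.get i • g (gdIter g x1 (L.take i.1))) = x1 - xk := by
    rw [hxk, gd_telescope g L x1]
    abel
  -- bound the sum in the primitive inequality
  have hsum : ∑ i : Fin L.length,
        L.get i * (f (gdIter g x1 (L.take i.1)) - f xs
          - ⟪g (gdIter g x1 (L.take i.1)), gdIter g x1 (L.take i.1) - xs⟫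
          + 2⁻¹ * ‖g (gdIter g x1 (L.take i.1))‖ ^ 2)
      ≤ A * (f x0 - f xs) - ⟪x1 - xk, x0 - xs⟫ - A * (‖g0‖ ^ 2 / 2) + ⟪g0, x1 - xk⟫ := by
    have step1 : ∑ i : Fin L.length,
        L.get i * (f (gdIter g x1 (L.take i.1)) - f xs
          - ⟪g (gdIter g x1 (L.take i.1)), gdIter g x1 (L.take i.1) - xs⟫
          + 2⁻¹ * ‖g (gdIter g x1 (L.take i.1))‖ ^ 2)
        ≤ ∑ i : Fin L.length,
        L.get i * ((f x0 - f xs) - ⟪g (gdIter g x1 (L.take i.1)), x0 - xs⟫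
          - ‖g0‖ ^ 2 / 2 + ⟪g0, g (gdIter g x1 (L.take i.1))⟫) := by
      refine Finset.sum_le_sum fun i _ => ?_
      exact mul_le_mul_of_nonneg_left (hterm i) (hpos _ (L.get_mem i)).le
    refine le_trans step1 (le_of_eq ?_)
    rw [← hS, sum_inner, inner_sum, hAsum, Finset.sum_mul, Finset.sum_mul]
    simp only [real_inner_smul_left, real_inner_smul_right]
    rw [← Finset.sum_sub_distrib, ← Finset.sum_sub_distrib, ← Finset.sum_add_distrib]
    exact Finset.sum_congr rfl fun i _ => by ring
  -- key vector inequality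
  have hkey2 := gd_key x0 g0 xk xs α0
  rw [← hx1] at hkey2
  have hCge : (0:ℝ) ≤ (A * (A + 1) / 2) * ‖g xk‖ ^ 2 := by positivity
  have hmul : A * (f xk - f x0) ≤ (α0 ^ 2 / 2 - A / 2 - α0 + 1 / 2) * ‖g0‖ ^ 2 := by
    have h5 : 2⁻¹ * ‖x1 - xs‖ ^ 2 = 2⁻¹ * ‖x0 - α0 • g0 - xs‖ ^ 2 := by rw [← hx1]
    nlinarith [hP, hsum, hkey2, hCge]
  rw [show (1 / A) * (α0 ^ 2 / 2 - A / 2 - α0 + 1 / 2) * ‖g0‖ ^ 2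
      = ((α0 ^ 2 / 2 - A / 2 - α0 + 1 / 2) * ‖g0‖ ^ 2) / A from by ring,
    le_div_iff₀ hApos]
  calc (f xk - f x0) * A = A * (f xk - f x0) := by ring
    _ ≤ _ := hmul
end
end

section
/- Define φ(x,y) := (−(x+y) + √((x+y+2)² + 4(x+1)(y+1)))/2. For every fixed y ≥ 0, the map x ↦ φ(x,y) is nondecreasing on [0,∞); consequently, for all x ≥ y ≥ 0 one has φ(x,y) ≥ φ(y,y) = (√2 − 1)y + √2. -/
open Finset
open scoped RealInnerProductSpace

noncomputable section

lemma phi_mono_aux (y : ℝ) (hy : 0 ≤ y) : MonotoneOn (fun x => phi x y) (Set.Ici (0:ℝ)) := by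
  intro x1 hx1 x2 hx2 h12
  simp only [Set.mem_Ici] at hx1 hx2
  unfold phi
  have hf1 : (0:ℝ) ≤ (x1 + y + 2) ^ 2 + 4 * (x1 + 1) * (y + 1) := by positivity
  have hs1 : Real.sqrt ((x1 + y + 2) ^ 2 + 4 * (x1 + 1) * (y + 1)) ≤ x1 + 3 * y + 4 := by
    rw [show x1 + 3 * y + 4 = Real.sqrt ((x1 + 3 * y + 4) ^ 2) by
      rw [Real.sqrt_sq (by linarith)]]
    exact Real.sqrt_le_sqrt (by nlinarith)
  have hsq1 := Real.sq_sqrt hf1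
  have hsn1 := Real.sqrt_nonneg ((x1 + y + 2) ^ 2 + 4 * (x1 + 1) * (y + 1))
  have key : Real.sqrt ((x1 + y + 2) ^ 2 + 4 * (x1 + 1) * (y + 1)) + (x2 - x1)
      ≤ Real.sqrt ((x2 + y + 2) ^ 2 + 4 * (x2 + 1) * (y + 1)) := by
    rw [show Real.sqrt ((x2 + y + 2) ^ 2 + 4 * (x2 + 1) * (y + 1))
        = Real.sqrt ((x2 + y + 2) ^ 2 + 4 * (x2 + 1) * (y + 1)) from rfl]
    refine (Real.le_sqrt (by linarith) (by nlinarith [sq_nonneg (x2+y+2)])).mpr ?_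
    nlinarith [sq_nonneg (x2 - x1)]
  linarith

lemma phi_diag (y : ℝ) (hy : 0 ≤ y) : phi y y = (Real.sqrt 2 - 1) * y + Real.sqrt 2 := by
  unfold phi
  have h : (y + y + 2) ^ 2 + 4 * (y + 1) * (y + 1) = (Real.sqrt 2 * (2 * (y + 1))) ^ 2 := by
    have := Real.sq_sqrt (by norm_num : (0:ℝ) ≤ 2)
    ring_nf
    nlinarith [this]
  rw [h, Real.sqrt_sq (by positivity)]
  ring

/-- `x ↦ φ(x,y)` is nondecreasing on `[0,∞)`; consequently for
`x ≥ y ≥ 0`, `φ(x,y) ≥ φ(y,y) = (√2−1)y + √2`. -/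
theorem phi_monotone :
    (∀ y : ℝ, 0 ≤ y → MonotoneOn (fun x => phi x y) (Set.Ici (0:ℝ))) ∧
    (∀ x y : ℝ, 0 ≤ y → y ≤ x →
      phi y y = (Real.sqrt 2 - 1) * y + Real.sqrt 2 ∧ phi y y ≤ phi x y) := by
  refine ⟨phi_mono_aux, fun x y hy hyx => ⟨phi_diag y hy, ?_⟩⟩
  exact phi_mono_aux y hy (Set.mem_Ici.mpr hy) (Set.mem_Ici.mpr (hy.trans hyx)) hyx
end
end
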